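/- arXiv:1704.05089 — 3 statements merged into one kernel-verified Lean document; each statement's English description precedes it below -/
import Mathlib

section
/- There exists n₀ such that for all integers n ≥ n₀ and all integers r, k with 3 ≤ r ≤ k ≤ 0.01·log₂ n, the number of r-element collinear subsets of the grid [n]^k = {1,…,n}^k ⊆ ℝ^k satisfies n^{2k}/r^{2k} ≤ e(H) ≤ (k·2^{r+k}/r!)·n^{2k}, where e(H) denotes the number of r-element subsets of [n]^k contained in a single line. -/
/-- A line in ℝᵏ: a one-dimensional affine subspace, viewed as a set of points. -/
def IsLine {k : ℕ} (L : Set (Fin k → ℝ)) : Prop :=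
  ∃ u v : Fin k → ℝ, v ≠ 0 ∧ L = {p | ∃ t : ℝ, p = u + t • v}

/-- The grid [n]^k = {1, …, n}^k viewed as a subset of ℝᵏ. -/
def gridPts (n k : ℕ) : Set (Fin k → ℝ) :=
  {p | ∀ i, ∃ m : ℕ, 1 ≤ m ∧ m ≤ n ∧ p i = m}

/-- e(H(n,k,r)): the number of r-element subsets of the grid [n]^k contained in a single line. -/
noncomputable def eH (n k r : ℕ) : ℕ :=
  {T : Set (Fin k → ℝ) | T ⊆ gridPts n k ∧ T.ncard = r ∧
    ∃ L : Set (Fin k → ℝ), IsLine L ∧ T ⊆ L}.ncard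

open Finset

namespace Collinear


noncomputable def ιZ {k : ℕ} (A : Fin k → ℤ) : Fin k → ℝ := fun i => (A i : ℝ)

lemma ιZ_inj {k : ℕ} : Function.Injective (ιZ (k := k)) := by
  intro a b h
  funext i
  have := congrFun h i
  simpa [ιZ] using this

def eHSet (n k r : ℕ) : Set (Set (Fin k → ℝ)) :=
  {T | T ⊆ gridPts n k ∧ T.ncard = r ∧ ∃ L : Set (Fin k → ℝ), IsLine L ∧ T ⊆ L}

lemma eH_eq (n k r : ℕ) : eH n k r = (eHSet n k r).ncard := rfl

lemma gridPts_finite (n k : ℕ) : (gridPts n k).Finite := by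
  apply Set.Finite.subset (Set.Finite.pi (fun i : Fin k =>
    Set.Finite.image (fun m : ℕ => (m : ℝ)) (Set.finite_Icc 1 n)))
  intro p hp i _
  obtain ⟨m, h1, h2, h3⟩ := hp i
  exact ⟨m, ⟨h1, h2⟩, h3.symm⟩

lemma eHSet_finite (n k r : ℕ) : (eHSet n k r).Finite := by
  apply Set.Finite.subset (gridPts_finite n k).finite_subsets
  intro T hT
  exact hT.1

/-- The encoding of the lower-bound family: `{a + j•d : 0 ≤ j < r}`. -/

noncomputable def lowEnc (r : ℕ) {k : ℕ} (a d : Fin k → ℤ) : Finset (Fin k → ℝ) :=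
  (Finset.range r).image (fun j : ℕ => ιZ (a + (j : ℤ) • d))

lemma lowEnc_mem_eHSet {n k r : ℕ} (hr : 3 ≤ r) (hk : 0 < k) (hrn : r ≤ n)
    (a d : Fin k → ℤ) (ha : ∀ i, 1 ≤ a i ∧ a i ≤ ((n - (r-1) * (n/r) : ℕ) : ℤ))
    (hd : ∀ i, 1 ≤ d i ∧ d i ≤ ((n / r : ℕ) : ℤ)) :
    (↑(lowEnc r a d) : Set (Fin k → ℝ)) ∈ eHSet n k r := by
  have i0 : Fin k := ⟨0, hk⟩
  set D : ℕ := n / r with hD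
  set M : ℕ := n - (r-1) * D with hMdef
  have hDn : (r - 1) * D ≤ n := by
    calc (r-1) * D ≤ r * D := Nat.mul_le_mul_right _ (Nat.sub_le r 1)
      _ ≤ n := Nat.mul_div_le n r
  have hM : (M:ℤ) + ((r-1:ℕ):ℤ) * (D:ℤ) = (n:ℤ) := by
    rw [← Nat.cast_mul, ← Nat.cast_add]
    congr 1
    omega
  have hinj : Function.Injective (fun j : ℕ => ιZ (a + (j : ℤ) • d)) := by
    intro j j' h
    have h2 : a + (j : ℤ) • d = a + (j' : ℤ) • d := ιZ_inj h
    have h3 : (j : ℤ) * d i0 = (j' : ℤ) * d i0 := by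
      have := congrFun (add_left_cancel h2) i0
      simpa using this
    have hd0 : d i0 ≠ 0 := by have := (hd i0).1; omega
    exact Nat.cast_injective (mul_right_cancel₀ hd0 h3)
  refine ⟨?_, ?_, ?_⟩
  · -- subset of grid
    intro p hp
    simp only [lowEnc, Finset.coe_image, Set.mem_image, Finset.mem_coe,
      Finset.mem_range] at hp
    obtain ⟨j, hj, rfl⟩ := hp
    intro i
    set x : ℤ := a i + (j:ℤ) * d i with hx
    have h1 : 1 ≤ x := by
      have h1 := (ha i).1; have h2 := (hd i).1
      nlinarith [Int.natCast_nonneg j]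
    have h2 : x ≤ (n : ℤ) := by
      have hai := (ha i).2
      have hdi := (hd i).2
      have hd1 : (0:ℤ) ≤ d i := le_trans zero_le_one (hd i).1
      have hjr : (j:ℤ) ≤ ((r-1:ℕ):ℤ) := by
        rw [Nat.cast_le (α := ℤ)] <;> omega
      have hjd : (j:ℤ) * d i ≤ ((r-1:ℕ):ℤ) * (D:ℤ) := by
        apply mul_le_mul hjr hdi hd1 (Int.natCast_nonneg _)
      omega
    refine ⟨x.toNat, by omega, by omega, ?_⟩
    have hxx : ((x.toNat : ℕ) : ℝ) = ((x : ℤ) : ℝ) := by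
      exact_mod_cast congrArg (fun z : ℤ => (z : ℝ)) (Int.toNat_of_nonneg (show (0:ℤ) ≤ x by omega))
    rw [hxx]
    simp only [ιZ, Pi.add_apply, Pi.smul_apply, smul_eq_mul, hx]
    try push_cast
    try ring
  · -- cardinality
    rw [Set.ncard_coe_finset, lowEnc, Finset.card_image_of_injective _ hinj,
      Finset.card_range]
  · -- line
    refine ⟨_, ⟨ιZ a, ιZ d, ?_, rfl⟩, ?_⟩
    · intro h
      have := congrFun h i0
      have hd0 := (hd i0).1
      simp only [ιZ, Pi.zero_apply] at this
      have : d i0 = 0 := by exact_mod_cast this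
      omega
    · intro p hp
      simp only [lowEnc, Finset.coe_image, Set.mem_image, Finset.mem_coe,
        Finset.mem_range] at hp
      obtain ⟨j, _, rfl⟩ := hp
      refine ⟨(j : ℝ), ?_⟩
      funext i
      simp only [ιZ, Pi.add_apply, Pi.smul_apply, smul_eq_mul]
      push_cast
      ring

lemma lowEnc_floor_image {r k : ℕ} (a d : Fin k → ℤ) (i : Fin k) :
    (lowEnc r a d).image (fun p => ⌊p i⌋) =
      (Finset.range r).image (fun j : ℕ => a i + (j : ℤ) * d i) := by
  rw [lowEnc, Finset.image_image]
  apply Finset.image_congr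
  intro j _
  show ⌊ιZ (a + (j:ℤ) • d) i⌋ = _
  simp only [ιZ, Pi.add_apply, Pi.smul_apply, smul_eq_mul]
  exact Int.floor_intCast _

lemma lowEnc_injOn {r k : ℕ} (hr : 3 ≤ r) :
    Set.InjOn (fun p : (Fin k → ℤ) × (Fin k → ℤ) => (↑(lowEnc r p.1 p.2) : Set (Fin k → ℝ)))
      {p | ∀ i, 1 ≤ p.2 i} := by
  rintro ⟨a, d⟩ had ⟨a', d'⟩ had' h
  simp only [Set.mem_setOf_eq] at had had'
  have hfin : lowEnc r a d = lowEnc r a' d' := Finset.coe_inj.mp h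
  have key : ∀ i, a i = a' i ∧ d i = d' i := by
    intro i
    have hX : (Finset.range r).image (fun j : ℕ => a i + (j : ℤ) * d i) =
        (Finset.range r).image (fun j : ℕ => a' i + (j : ℤ) * d' i) := by
      rw [← lowEnc_floor_image, ← lowEnc_floor_image, hfin]
    have hr0 : 0 < r := by omega
    -- membership facts
    have hmem : ∀ (α β : ℤ), 1 ≤ β → ∀ x ∈ (Finset.range r).image
        (fun j : ℕ => α + (j : ℤ) * β), α ≤ x ∧ x ≤ α + ((r:ℤ) - 1) * β := by
      intro α β hβ x hx
      simp only [Finset.mem_image, Finset.mem_range] at hx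
      obtain ⟨j, hj, rfl⟩ := hx
      constructor
      · nlinarith [Int.natCast_nonneg j]
      · have hjr : (j:ℤ) ≤ (r:ℤ) - 1 := by omega
        nlinarith
    have hbot : ∀ (α β : ℤ), α ∈ (Finset.range r).image (fun j : ℕ => α + (j : ℤ) * β) := by
      intro α β
      simp only [Finset.mem_image, Finset.mem_range]
      exact ⟨0, hr0, by ring⟩
    have htop : ∀ (α β : ℤ), α + ((r:ℤ) - 1) * β ∈
        (Finset.range r).image (fun j : ℕ => α + (j : ℤ) * β) := by
      intro α β
      simp only [Finset.mem_image, Finset.mem_range]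
      refine ⟨r - 1, by omega, ?_⟩
      congr 1
      have : ((r - 1 : ℕ) : ℤ) = (r:ℤ) - 1 := by omega
      rw [this]
    have ha1 : a i = a' i := by
      have h1 := (hmem (a i) (d i) (had i) (a' i) (hX ▸ hbot (a' i) (d' i))).1
      have h2 := (hmem (a' i) (d' i) (had' i) (a i) (hX.symm ▸ hbot (a i) (d i))).1
      omega
    have ha2 : a i + ((r:ℤ) - 1) * d i = a' i + ((r:ℤ) - 1) * d' i := by
      have h1 := (hmem (a i) (d i) (had i) _ (hX ▸ htop (a' i) (d' i))).2
      have h2 := (hmem (a' i) (d' i) (had' i) _ (hX.symm ▸ htop (a i) (d i))).2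
      omega
    refine ⟨ha1, ?_⟩
    have hrne : (r:ℤ) - 1 ≠ 0 := by omega
    have := ha2
    rw [ha1] at this
    have h3 : ((r:ℤ) - 1) * d i = ((r:ℤ) - 1) * d' i := by omega
    exact mul_left_cancel₀ hrne h3
  exact Prod.ext (funext fun i => (key i).1) (funext fun i => (key i).2)

lemma arith_lower (r D s : ℕ) (hr : 3 ≤ r) (hD : 1 ≤ D) (hs : s < r) :
    (r * D + s)^2 ≤ r^2 * (D + s) * D := by
  have h1 : s * s ≤ r * s := Nat.mul_le_mul_right s hs.le
  have h2 : r * s ≤ r * D * s := by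
    have : r * 1 * s ≤ r * D * s := Nat.mul_le_mul_right s (Nat.mul_le_mul_left r hD)
    simpa using this
  have h3 : 3 * (r * D * s) ≤ r * (r * D * s) := Nat.mul_le_mul_right _ hr
  nlinarith [h1, h2, h3]

lemma lower_bound {n k r : ℕ} (hr : 3 ≤ r) (hrk : r ≤ k) (hrn : r ≤ n) :
    (n:ℝ)^(2*k) / (r:ℝ)^(2*k) ≤ (eH n k r : ℝ) := by
  have hk : 0 < k := by omega
  set D : ℕ := n / r with hD
  set M : ℕ := n - (r-1) * D with hMdef
  have hD1 : 1 ≤ D := Nat.one_le_div_iff (by omega) |>.mpr hrn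
  have hDn : (r - 1) * D ≤ n := by
    calc (r-1) * D ≤ r * D := Nat.mul_le_mul_right _ (Nat.sub_le r 1)
      _ ≤ n := Nat.mul_div_le n r
  -- the domain
  set Dom : Finset ((Fin k → ℤ) × (Fin k → ℤ)) :=
    Finset.Icc (fun _ => 1) (fun _ => (M:ℤ)) ×ˢ Finset.Icc (fun _ => 1) (fun _ => (D:ℤ))
    with hDom
  have hcard : Dom.card = M ^ k * D ^ k := by
    rw [hDom, Finset.card_product, Pi.card_Icc, Pi.card_Icc]
    simp [Int.card_Icc]
  -- the image is inside eHSet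
  have himg : (fun p : (Fin k → ℤ) × (Fin k → ℤ) =>
      (↑(lowEnc r p.1 p.2) : Set (Fin k → ℝ))) '' ↑Dom ⊆ eHSet n k r := by
    rintro T ⟨⟨a, d⟩, hp, rfl⟩
    simp only [hDom, Finset.coe_product, Set.mem_prod, Finset.mem_coe, Finset.mem_Icc,
      Pi.le_def] at hp
    exact lowEnc_mem_eHSet hr hk hrn a d
      (fun i => ⟨hp.1.1 i, hp.1.2 i⟩) (fun i => ⟨hp.2.1 i, hp.2.2 i⟩)
  have hDomsub : (↑Dom : Set ((Fin k → ℤ) × (Fin k → ℤ))) ⊆ {p | ∀ i, 1 ≤ p.2 i} := by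
    rintro ⟨a, d⟩ hp
    simp only [hDom, Finset.coe_product, Set.mem_prod, Finset.mem_coe, Finset.mem_Icc,
      Pi.le_def] at hp
    exact fun i => hp.2.1 i
  have hinj := (lowEnc_injOn (k := k) hr).mono hDomsub
  have hcount : M ^ k * D ^ k ≤ eH n k r := by
    rw [eH_eq]
    calc M ^ k * D ^ k = Dom.card := hcard.symm
      _ = (↑Dom : Set ((Fin k → ℤ) × (Fin k → ℤ))).ncard := (Set.ncard_coe_finset _).symm
      _ = ((fun p : (Fin k → ℤ) × (Fin k → ℤ) =>
            (↑(lowEnc r p.1 p.2) : Set (Fin k → ℝ))) '' ↑Dom).ncard :=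
        (Set.ncard_image_of_injOn hinj).symm
      _ ≤ (eHSet n k r).ncard := Set.ncard_le_ncard himg (eHSet_finite n k r)
  -- arithmetic
  have harith : (n:ℝ)^(2*k) ≤ (r:ℝ)^(2*k) * (M ^ k * D ^ k : ℕ) := by
    have hkey : n^2 ≤ r^2 * M * D := by
      have hnd : r * D + n % r = n := by rw [hD]; exact Nat.div_add_mod n r
      have hM' : M = D + n % r := by
        have h1 : (r - 1) * D + D = r * D := by
          have : (r - 1) + 1 = r := by omega
          calc (r-1) * D + D = ((r-1) + 1) * D := by ring
            _ = r * D := by rw [this]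
        omega
      have := arith_lower r D (n % r) hr hD1 (Nat.mod_lt n (by omega))
      calc n^2 = (r * D + n % r)^2 := by rw [hnd]
        _ ≤ r^2 * (D + n % r) * D := this
        _ = r^2 * M * D := by rw [hM']
    calc (n:ℝ)^(2*k) = ((n^2:ℕ):ℝ)^k := by push_cast; rw [← pow_mul]
      _ ≤ ((r^2 * M * D : ℕ):ℝ)^k := by
          apply pow_le_pow_left₀ (by positivity)
          exact_mod_cast hkey
      _ = (r:ℝ)^(2*k) * (M ^ k * D ^ k : ℕ) := by push_cast; ring
  have hrpos : (0:ℝ) < (r:ℝ)^(2*k) := by positivity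
  rw [div_le_iff₀ hrpos]
  calc (n:ℝ)^(2*k) ≤ (r:ℝ)^(2*k) * (M ^ k * D ^ k : ℕ) := harith
    _ ≤ (r:ℝ)^(2*k) * (eH n k r : ℝ) := by
        apply mul_le_mul_of_nonneg_left _ (le_of_lt hrpos)
        exact_mod_cast hcount
    _ = (eH n k r : ℝ) * (r:ℝ)^(2*k) := by ring

lemma gcd_nonneg' {k : ℕ} (e : Fin k → ℤ) : 0 ≤ Finset.gcd Finset.univ e := by
  have := Finset.normalize_gcd (s := (Finset.univ : Finset (Fin k))) (f := e)
  rw [← this, ← Int.abs_eq_normalize]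
  exact abs_nonneg _

lemma exists_param {k : ℕ} (e z : Fin k → ℤ) (i1 : Fin k) (he : e i1 ≠ 0)
    (hcross : ∀ i, z i * e i1 = z i1 * e i) :
    ∃ j : ℤ, ∀ i, z i = j * (e i / Finset.gcd Finset.univ e) := by
  set g : ℤ := Finset.gcd Finset.univ e with hgdef
  set d : Fin k → ℤ := fun i => e i / g with hddef
  have hg : ∀ i, g ∣ e i := fun i => Finset.gcd_dvd (Finset.mem_univ i)
  have hgd : ∀ i, e i = g * d i := fun i => (Int.mul_ediv_cancel' (hg i)).symm
  have hgne : g ≠ 0 := by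
    intro h0
    exact he (by simpa [h0] using (Finset.gcd_eq_zero_iff.mp (hgdef ▸ h0)) i1 (Finset.mem_univ i1))
  have hd1 : d i1 ≠ 0 := by
    intro h0
    exact he (by rw [hgd i1, h0, mul_zero])
  have hcross' : ∀ i, z i * d i1 = z i1 * d i := by
    intro i
    have h := hcross i
    rw [hgd i1, hgd i] at h
    have : g * (z i * d i1) = g * (z i1 * d i) := by ring_nf; ring_nf at h; linarith
    exact mul_left_cancel₀ hgne this
  have hdvd : d i1 ∣ z i1 := by
    have h1 : d i1 ∣ Finset.gcd Finset.univ (fun i => z i1 * d i) :=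
      Finset.dvd_gcd (fun i _ => ⟨z i, by rw [← hcross' i]; ring⟩)
    rw [Finset.gcd_mul_left] at h1
    have h2 : Finset.gcd Finset.univ d = 1 := by
      have := Finset.gcd_div_eq_one (f := e) (Finset.mem_univ i1) he
      simpa [hddef, hgdef] using this
    rw [h2, mul_one] at h1
    exact dvd_normalize_iff.mp h1
  obtain ⟨j, hj⟩ := hdvd
  refine ⟨j, fun i => ?_⟩
  have := hcross' i
  rw [hj] at this
  have h3 : z i * d i1 = j * d i * d i1 := by linarith [this]; 
  exact mul_right_cancel₀ hd1 (by linarith [h3])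

lemma encode {n k r : ℕ} (hr : 3 ≤ r) {T : Set (Fin k → ℝ)} (hT : T ∈ eHSet n k r) :
    ∃ A e : Fin k → ℤ,
      (∀ i, 1 ≤ A i ∧ A i ≤ (n:ℤ)) ∧ (∀ i, 1 ≤ A i + e i ∧ A i + e i ≤ (n:ℤ)) ∧ e ≠ 0 ∧
      ∃ Q : Finset ℤ, Q ⊆ Finset.Icc 1 (Finset.gcd Finset.univ e - 1) ∧ Q.card = r - 2 ∧
        T = ↑((insert 0 (insert (Finset.gcd Finset.univ e) Q)).image
              (fun j => ιZ (A + j • fun i => e i / Finset.gcd Finset.univ e))) := by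
  classical
  obtain ⟨hTg, hTc, L, ⟨u, v, hv, rfl⟩, hTL⟩ := hT
  have hfin : T.Finite := (gridPts_finite n k).subset hTg
  -- integer coordinates
  set Z : (Fin k → ℝ) → (Fin k → ℤ) := fun p i => ⌊p i⌋ with hZdef
  have hZ : ∀ p ∈ T, ιZ (Z p) = p ∧ ∀ i, 1 ≤ Z p i ∧ Z p i ≤ (n:ℤ) := by
    intro p hp
    have h := hTg hp
    constructor
    · funext i
      obtain ⟨m, _, _, hm⟩ := h i
      simp [ιZ, hZdef, hm, Int.floor_natCast]
    · intro i
      obtain ⟨m, h1, h2, hm⟩ := h i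
      have : Z p i = (m:ℤ) := by simp [hZdef, hm, Int.floor_natCast]
      rw [this]
      exact ⟨by exact_mod_cast h1, by exact_mod_cast h2⟩
  -- parameter along the line
  obtain ⟨i1, hi1⟩ := Function.ne_iff.mp hv
  simp only [Pi.zero_apply] at hi1
  set τ : (Fin k → ℝ) → ℝ := fun p => (p i1 - u i1) / v i1 with hτdef
  have hτ : ∀ p ∈ T, p = u + τ p • v := by
    intro p hp
    obtain ⟨t, ht⟩ := hTL hp
    have : τ p = t := by
      rw [hτdef]
      simp only [ht, Pi.add_apply, Pi.smul_apply, smul_eq_mul]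
      field_simp
      ring
    rw [this]
    exact ht
  set F : Finset (Fin k → ℝ) := hfin.toFinset with hFdef
  have hFmem : ∀ p, p ∈ F ↔ p ∈ T := fun p => hfin.mem_toFinset
  have hFcard : F.card = r := by rw [← hTc, Set.ncard_eq_toFinset_card T hfin]
  have hFne : F.Nonempty := Finset.card_pos.mp (by omega)
  obtain ⟨pa, hpaF, hmin⟩ := F.exists_min_image τ hFne
  obtain ⟨pb, hpbF, hmax⟩ := F.exists_max_image τ hFne
  have hpa : pa ∈ T := (hFmem pa).mp hpaF
  have hpb : pb ∈ T := (hFmem pb).mp hpbF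
  have hτab : τ pa < τ pb := by
    rcases lt_or_ge (τ pa) (τ pb) with h | h
    · exact h
    · exfalso
      have hsub : T ⊆ {pa} := by
        intro p hp
        have h1 : τ p ≤ τ pa := le_trans (hmax p ((hFmem p).mpr hp)) h
        have h2 : τ pa ≤ τ p := hmin p ((hFmem p).mpr hp)
        have : τ p = τ pa := le_antisymm h1 h2
        rw [Set.mem_singleton_iff, hτ p hp, hτ pa hpa, this]
      have := Set.ncard_le_ncard hsub (Set.finite_singleton pa)
      rw [hTc, Set.ncard_singleton] at this
      omega
  set A : Fin k → ℤ := Z pa with hAdef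
  set B : Fin k → ℤ := Z pb with hBdef
  set e : Fin k → ℤ := B - A with hedef
  have hιA : ιZ A = pa := (hZ pa hpa).1
  have hιB : ιZ B = pb := (hZ pb hpb).1
  have he0 : e ≠ 0 := by
    intro h0
    have : A = B := by
      funext i
      have := congrFun h0 i
      simp only [hedef, Pi.sub_apply, Pi.zero_apply] at this
      omega
    have : pa = pb := by rw [← hιA, ← hιB, this]
    rw [this] at hτab
    exact lt_irrefl _ hτab
  set g : ℤ := Finset.gcd Finset.univ e with hgdef
  set d : Fin k → ℤ := fun i => e i / g with hddef
  have hgd : ∀ i, e i = g * d i :=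
    fun i => (Int.mul_ediv_cancel' (Finset.gcd_dvd (Finset.mem_univ i))).symm
  have hgne : g ≠ 0 := by
    intro h0
    apply he0
    funext i
    exact Finset.gcd_eq_zero_iff.mp h0 i (Finset.mem_univ i)
  have hgpos : 0 < g := lt_of_le_of_ne (gcd_nonneg' e) (Ne.symm hgne)
  obtain ⟨i2, hi2⟩ := Function.ne_iff.mp he0
  simp only [Pi.zero_apply] at hi2
  have hd2 : d i2 ≠ 0 := by
    intro h0
    exact hi2 (by rw [hgd i2, h0, mul_zero])
  -- real coordinates of pa, pb
  have hAco : ∀ i, (A i : ℝ) = pa i := fun i => congrFun hιA i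
  have hBco : ∀ i, (B i : ℝ) = pb i := fun i => congrFun hιB i
  have heco : ∀ i, (e i : ℝ) = (τ pb - τ pa) * v i := by
    intro i
    have : (e i : ℝ) = pb i - pa i := by
      simp only [hedef, Pi.sub_apply]
      push_cast
      rw [hAco i, hBco i]
    have hb := congrFun (hτ pb hpb) i
    have ha := congrFun (hτ pa hpa) i
    simp only [Pi.add_apply, Pi.smul_apply, smul_eq_mul] at hb ha
    rw [this, hb, ha]
    ring
  -- every point of T has the form A + j • d
  have key : ∀ p ∈ T, ∃ j : ℤ, 0 ≤ j ∧ j ≤ g ∧ p = ιZ (A + j • d) := by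
    intro p hp
    set z : Fin k → ℤ := Z p - A with hzdef
    set θ : ℝ := (τ p - τ pa) / (τ pb - τ pa) with hθdef
    have hden : τ pb - τ pa > 0 := by linarith
    have hθ0 : 0 ≤ θ := by
      apply div_nonneg _ (le_of_lt hden)
      have := hmin p ((hFmem p).mpr hp)
      linarith
    have hθ1 : θ ≤ 1 := by
      rw [hθdef, div_le_one hden]
      have := hmax p ((hFmem p).mpr hp)
      linarith
    have hreal : ∀ i, (z i : ℝ) = θ * (e i : ℝ) := by
      intro i
      have hpco : ∀ i', (Z p i' : ℝ) = p i' := fun i' => congrFun (hZ p hp).1 i'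
      have h1 : (z i : ℝ) = p i - pa i := by
        simp only [hzdef, Pi.sub_apply]
        push_cast
        rw [hpco i, hAco i]
      have hc := congrFun (hτ p hp) i
      have ha := congrFun (hτ pa hpa) i
      simp only [Pi.add_apply, Pi.smul_apply, smul_eq_mul] at hc ha
      have hθe : θ * (τ pb - τ pa) = τ p - τ pa := by
        rw [hθdef]
        field_simp
      rw [h1, heco i, hc, ha]
      calc (u i + τ p * v i) - (u i + τ pa * v i) = (τ p - τ pa) * v i := by ring
        _ = (θ * (τ pb - τ pa)) * v i := by rw [hθe]
        _ = θ * ((τ pb - τ pa) * v i) := by ring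
    have hcross : ∀ i, z i * e i2 = z i2 * e i := by
      intro i
      have : (z i : ℝ) * (e i2 : ℝ) = (z i2 : ℝ) * (e i : ℝ) := by
        rw [hreal i, hreal i2]; ring
      exact_mod_cast this
    obtain ⟨j, hj⟩ := exists_param e z i2 hi2 hcross
    have hjd : ∀ i, z i = j * d i := hj
    have hjθ : (j : ℝ) = θ * (g : ℝ) := by
      have h1 : (z i2 : ℝ) = (j : ℝ) * (d i2 : ℝ) := by exact_mod_cast congrArg Int.cast (hjd i2)
      have h2 : (e i2 : ℝ) = (g : ℝ) * (d i2 : ℝ) := by exact_mod_cast congrArg Int.cast (hgd i2)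
      have h3 := hreal i2
      rw [h1, h2] at h3
      have hd2r : (d i2 : ℝ) ≠ 0 := Int.cast_ne_zero.mpr hd2
      exact mul_right_cancel₀ hd2r (by rw [h3]; ring)
    refine ⟨j, ?_, ?_, ?_⟩
    · have : (0:ℝ) ≤ (j:ℝ) := by
        rw [hjθ]
        positivity
      exact_mod_cast this
    · have : (j:ℝ) ≤ (g:ℝ) := by
        rw [hjθ]
        nlinarith [hθ1, hθ0, (show (0:ℝ) ≤ (g:ℝ) by exact_mod_cast le_of_lt hgpos)]
      exact_mod_cast this
    · funext i
      have hpco : (Z p i : ℝ) = p i := congrFun (hZ p hp).1 i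
      simp only [ιZ, Pi.add_apply, Pi.smul_apply, smul_eq_mul]
      rw [← hpco]
      have : Z p i = A i + j * d i := by
        have := hjd i
        simp only [hzdef, Pi.sub_apply] at this
        omega
      rw [this]
      all_goals (push_cast; ring)
  have hinj : Function.Injective (fun j : ℤ => ιZ (A + j • d)) := by
    intro j j' h
    have h2 : A + j • d = A + j' • d := ιZ_inj h
    have h3 : j * d i2 = j' * d i2 := by
      have := congrFun (add_left_cancel h2) i2
      simp only [Pi.smul_apply, smul_eq_mul] at this
      exact this
    exact mul_right_cancel₀ hd2 h3
  set Qf : Finset ℤ := (Finset.Icc 0 g).filter (fun j => ιZ (A + j • d) ∈ T) with hQfdef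
  have hTQ : T = ↑(Qf.image (fun j => ιZ (A + j • d))) := by
    ext p
    constructor
    · intro hp
      obtain ⟨j, hj0, hjg, hjp⟩ := key p hp
      simp only [Finset.coe_image, Set.mem_image, Finset.mem_coe, hQfdef, Finset.mem_filter,
        Finset.mem_Icc]
      exact ⟨j, ⟨⟨hj0, hjg⟩, hjp ▸ hp⟩, hjp.symm⟩
    · intro hp
      simp only [Finset.coe_image, Set.mem_image, Finset.mem_coe, hQfdef, Finset.mem_filter,
        Finset.mem_Icc] at hp
      obtain ⟨j, ⟨_, hj⟩, rfl⟩ := hp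
      exact hj
  have h0mem : (0:ℤ) ∈ Qf := by
    rw [hQfdef, Finset.mem_filter, Finset.mem_Icc]
    refine ⟨⟨le_refl 0, le_of_lt hgpos⟩, ?_⟩
    have : A + (0:ℤ) • d = A := by simp
    rw [this, hιA]
    exact hpa
  have hgmem : g ∈ Qf := by
    rw [hQfdef, Finset.mem_filter, Finset.mem_Icc]
    refine ⟨⟨le_of_lt hgpos, le_refl g⟩, ?_⟩
    have : A + g • d = B := by
      funext i
      simp only [Pi.add_apply, Pi.smul_apply, smul_eq_mul]
      have := hgd i
      simp only [hedef, Pi.sub_apply] at this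
      omega
    rw [this, hιB]
    exact hpb
  have hQfcard : Qf.card = r := by
    have h1 : (↑(Qf.image (fun j : ℤ => ιZ (A + j • d))) : Set (Fin k → ℝ)).ncard = r := by
      rw [← hTQ]; exact hTc
    rw [Set.ncard_coe_finset, Finset.card_image_of_injective _ hinj] at h1
    exact h1
  set Q : Finset ℤ := (Qf.erase 0).erase g with hQdef
  have hgmem' : g ∈ Qf.erase 0 := Finset.mem_erase.mpr ⟨hgne, hgmem⟩
  have hQcard : Q.card = r - 2 := by
    rw [hQdef, Finset.card_erase_of_mem hgmem', Finset.card_erase_of_mem h0mem, hQfcard]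
    omega
  have hQsub : Q ⊆ Finset.Icc 1 (g - 1) := by
    intro j hj
    rw [hQdef] at hj
    have h1 := Finset.mem_erase.mp hj
    have h2 := Finset.mem_erase.mp h1.2
    have h3 := Finset.mem_filter.mp h2.2
    have h4 := Finset.mem_Icc.mp h3.1
    rw [Finset.mem_Icc]
    constructor
    · have := h2.1; omega
    · have := h1.1; omega
  have hins : insert 0 (insert g Q) = Qf := by
    rw [hQdef, Finset.insert_erase hgmem', Finset.insert_erase h0mem]
  exact ⟨A, e, fun i => (hZ pa hpa).2 i, fun i => by
      have h1 := (hZ pb hpb).2 i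
      have h2 : A i + e i = B i := by simp [hedef]
      rw [h2]; exact h1,
    he0, Q, hQsub, hQcard, by rw [← hgdef, hins, ← hddef]; exact hTQ⟩

noncomputable def decode {k : ℕ} (c : (Fin k → ℤ) × (Fin k → ℤ) × Finset ℤ) : Set (Fin k → ℝ) :=
  ↑((insert 0 (insert (Finset.gcd Finset.univ c.2.1) c.2.2)).image
      (fun j => ιZ (c.1 + j • fun i => c.2.1 i / Finset.gcd Finset.univ c.2.1)))

noncomputable def Evec (n k : ℕ) : Finset (Fin k → ℤ) :=
  (Finset.Icc (fun _ => -((n:ℤ) - 1)) (fun _ => (n:ℤ) - 1)).erase 0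

noncomputable def Aset (n : ℕ) {k : ℕ} (e : Fin k → ℤ) : Finset (Fin k → ℤ) :=
  Finset.Icc (fun i => max 1 (1 - e i)) (fun i => min (n:ℤ) ((n:ℤ) - e i))

noncomputable def pw (r : ℕ) {k : ℕ} (e : Fin k → ℤ) : Finset (Finset ℤ) :=
  (Finset.Icc (1:ℤ) (Finset.gcd Finset.univ e - 1)).powersetCard (r - 2)

noncomputable def codes (n k r : ℕ) : Finset ((Fin k → ℤ) × (Fin k → ℤ) × Finset ℤ) :=
  (Evec n k).biUnion (fun e => (Aset n e) ×ˢ ({e} ×ˢ pw r e))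

lemma eH_le_codes {n k r : ℕ} (hr : 3 ≤ r) : eH n k r ≤ (codes n k r).card := by
  classical
  rw [eH_eq]
  have hsub : eHSet n k r ⊆ decode '' ↑(codes n k r) := by
    intro T hT
    obtain ⟨A, e, hA, hAe, he0, Q, hQsub, hQcard, hdec⟩ := encode hr hT
    refine ⟨(A, e, Q), ?_, hdec.symm⟩
    simp only [Finset.mem_coe, codes, Finset.mem_biUnion]
    refine ⟨e, ?_, ?_⟩
    · rw [Evec, Finset.mem_erase, Finset.mem_Icc]
      refine ⟨he0, ?_, ?_⟩ <;> (rw [Pi.le_def]; intro i) <;>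
        [skip; skip] <;> (have h1 := hA i; have h2 := hAe i; omega)
    · rw [Finset.mem_product, Finset.mem_product]
      refine ⟨?_, Finset.mem_singleton_self e, ?_⟩
      · rw [Aset, Finset.mem_Icc]
        constructor <;> (rw [Pi.le_def]; intro i) <;>
          (have h1 := hA i; have h2 := hAe i; simp only [Pi.sup_apply]; omega)
      · rw [pw, Finset.mem_powersetCard]
        exact ⟨hQsub, hQcard⟩
  calc (eHSet n k r).ncard ≤ (decode '' ↑(codes n k r)).ncard :=
        Set.ncard_le_ncard hsub ((codes n k r).finite_toSet.image _)
    _ ≤ (↑(codes n k r) : Set ((Fin k → ℤ) × (Fin k → ℤ) × Finset ℤ)).ncard :=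
        Set.ncard_image_le ((codes n k r).finite_toSet)
    _ = (codes n k r).card := Set.ncard_coe_finset _

lemma codes_card_le {n k r : ℕ} (hn : 1 ≤ n) :
    (codes n k r).card ≤ ∑ e ∈ Evec n k,
      (∏ i, ((n:ℤ) - |e i|).toNat) * ((Finset.gcd Finset.univ e - 1).toNat.choose (r - 2)) := by
  classical
  refine le_trans Finset.card_biUnion_le (Finset.sum_le_sum ?_)
  intro e he
  rw [Finset.card_product, Finset.card_product, Finset.card_singleton, pw,
    Finset.card_powersetCard, Int.card_Icc]
  have hbound : ∀ i, |e i| ≤ (n:ℤ) - 1 := by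
    intro i
    have := Finset.mem_Icc.mp (Finset.mem_erase.mp (by rwa [Evec] at he)).2
    have h1 := this.1 i
    have h2 := this.2 i
    simp only at h1 h2
    rw [abs_le]
    omega
  have hAcard : (Aset n e).card = ∏ i, ((n:ℤ) - |e i|).toNat := by
    rw [Aset, Pi.card_Icc]
    apply Finset.prod_congr rfl
    intro i _
    rw [Int.card_Icc]
    congr 1
    have := hbound i
    rcases le_or_gt 0 (e i) with h | h
    · rw [abs_of_nonneg h] at *
      omega
    · rw [abs_of_neg h] at *
      omega
  rw [hAcard, one_mul]
  apply Nat.mul_le_mul_left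
  apply Nat.choose_le_choose
  omega

noncomputable def sJ (n J : ℕ) : Finset ℤ :=
  (Finset.Icc (-((n:ℤ) - 1)) ((n:ℤ) - 1)).filter (fun m => ((J:ℤ)) ∣ m)

noncomputable def scoord (n J : ℕ) : ℕ := ∑ m ∈ sJ n J, ((n:ℤ) - |m|).toNat

lemma gNat_mem {n k : ℕ} (hk : 0 < k) {e : Fin k → ℤ} (he : e ∈ Evec n k) :
    (Finset.gcd Finset.univ e).toNat ∈ Finset.Icc 1 (n - 1) := by
  rw [Evec, Finset.mem_erase, Finset.mem_Icc] at he
  obtain ⟨he0, hlo, hhi⟩ := he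
  have hnn := gcd_nonneg' e
  obtain ⟨i2, hi2⟩ := Function.ne_iff.mp he0
  simp only [Pi.zero_apply] at hi2
  have hdvd : Finset.gcd Finset.univ e ∣ e i2 := Finset.gcd_dvd (Finset.mem_univ i2)
  have hgne : Finset.gcd Finset.univ e ≠ 0 := by
    intro h0
    exact hi2 (Finset.gcd_eq_zero_iff.mp h0 i2 (Finset.mem_univ i2))
  have hle : Finset.gcd Finset.univ e ≤ |e i2| := Int.le_of_dvd (abs_pos.mpr hi2) ((dvd_abs _ _).mpr hdvd)
  have h1 := hlo i2
  have h2 := hhi i2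
  simp only at h1 h2
  rw [Finset.mem_Icc]
  constructor
  · omega
  · have : |e i2| ≤ (n:ℤ) - 1 := abs_le.mpr ⟨h1, h2⟩
    omega

lemma toNat_pred (G : ℤ) (J : ℕ) (h : G.toNat = J) (hnn : 0 ≤ G) : (G - 1).toNat = J - 1 := by
  omega

lemma cast_eq_of_toNat (G : ℤ) (J : ℕ) (h : G.toNat = J) (hnn : 0 ≤ G) : (J:ℤ) = G := by
  omega

lemma fiber_sum {n k r : ℕ} (hk : 0 < k) :
    ∑ e ∈ Evec n k,
      (∏ i, ((n:ℤ) - |e i|).toNat) * ((Finset.gcd Finset.univ e - 1).toNat.choose (r - 2))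
    ≤ ∑ J ∈ Finset.Icc 1 (n-1), (scoord n J)^k * ((J-1).choose (r - 2)) := by
  classical
  have hre := Finset.sum_fiberwise_of_maps_to (s := Evec n k) (t := Finset.Icc 1 (n-1))
    (g := fun e => (Finset.gcd Finset.univ e).toNat)
    (fun e he => gNat_mem hk he)
    (fun e => (∏ i, ((n:ℤ) - |e i|).toNat) * ((Finset.gcd Finset.univ e - 1).toNat.choose (r - 2)))
  rw [← hre]
  apply Finset.sum_le_sum
  intro J hJ
  have hfib : ∀ e ∈ (Evec n k).filter (fun e => (Finset.gcd Finset.univ e).toNat = J),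
      (Finset.gcd Finset.univ e - 1).toNat = J - 1 := by
    intro e he
    rw [Finset.mem_filter] at he
    have he2 : (Finset.gcd Finset.univ e).toNat = J := he.2
    exact toNat_pred _ _ he.2 (gcd_nonneg' e)
  refine le_trans (le_of_eq (Finset.sum_congr rfl (fun e he => by rw [hfib e he]))) ?_
  rw [← Finset.sum_mul]
  refine Nat.mul_le_mul_right _ ?_
  have hsub : (Evec n k).filter (fun e => (Finset.gcd Finset.univ e).toNat = J) ⊆
      Fintype.piFinset (fun _ : Fin k => sJ n J) := by
    intro e he
    rw [Finset.mem_filter] at he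
    obtain ⟨heE, heJ⟩ := he
    have heJ' : (Finset.gcd Finset.univ e).toNat = J := heJ
    clear heJ
    rw [Fintype.mem_piFinset]
    intro i
    rw [Evec, Finset.mem_erase, Finset.mem_Icc] at heE
    rw [sJ, Finset.mem_filter, Finset.mem_Icc]
    refine ⟨⟨heE.2.1 i, heE.2.2 i⟩, ?_⟩
    have hdvd : Finset.gcd Finset.univ e ∣ e i := Finset.gcd_dvd (Finset.mem_univ i)
    have hnn := gcd_nonneg' e
    rwa [cast_eq_of_toNat _ _ heJ' hnn]
  refine le_trans (Finset.sum_le_sum_of_subset hsub) ?_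
  have hps := Finset.prod_univ_sum (fun _ : Fin k => sJ n J) (fun _ m => ((n:ℤ) - |m|).toNat)
  rw [← hps, Finset.prod_const, Finset.card_univ, Fintype.card_fin, scoord]

lemma sum_icc_abs (T' : ℕ) (N J : ℤ) :
    ∑ t ∈ Finset.Icc (-(T':ℤ)) (T':ℤ), (N - J * |t|) =
      (2*(T':ℤ)+1)*N - J*((T':ℤ)*((T':ℤ)+1)) := by
  induction T' with
  | zero => simp
  | succ m ih =>
    have hin : Finset.Icc (-((m+1:ℕ):ℤ)) ((m+1:ℕ):ℤ) =
        insert (-((m:ℤ)+1)) (insert ((m:ℤ)+1) (Finset.Icc (-(m:ℤ)) (m:ℤ))) := by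
      ext t
      simp only [Finset.mem_Icc, Finset.mem_insert]
      push_cast
      omega
    have h1 : ((m:ℤ)+1) ∉ Finset.Icc (-(m:ℤ)) (m:ℤ) := by
      simp only [Finset.mem_Icc]
      omega
    have h2 : (-((m:ℤ)+1)) ∉ insert ((m:ℤ)+1) (Finset.Icc (-(m:ℤ)) (m:ℤ)) := by
      simp only [Finset.mem_insert, Finset.mem_Icc]
      omega
    rw [hin, Finset.sum_insert h2, Finset.sum_insert h1, ih]
    rw [abs_neg, abs_of_nonneg (by positivity : (0:ℤ) ≤ (m:ℤ)+1)]
    push_cast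
    ring

lemma scoord_mul_le {n J : ℕ} (hJ : 1 ≤ J) (hJn : J ≤ n - 1) (hn : 2 ≤ n) :
    (J:ℤ) * (scoord n J : ℤ) ≤ 2 * (n:ℤ)^2 := by
  classical
  set T' : ℕ := (n-1)/J with hT'
  have hJT : J * T' ≤ n - 1 := by
    rw [hT', Nat.mul_comm]
    exact Nat.div_mul_le_self (n-1) J
  have hJTz : (J:ℤ) * (T':ℤ) ≤ (n:ℤ) - 1 := by
    have : ((J * T' : ℕ) : ℤ) ≤ ((n - 1 : ℕ) : ℤ) := by exact_mod_cast hJT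
    push_cast at this
    omega
  have hsub : sJ n J ⊆ (Finset.Icc (-(T':ℤ)) (T':ℤ)).image (fun t => (J:ℤ) * t) := by
    intro m hm
    rw [sJ, Finset.mem_filter, Finset.mem_Icc] at hm
    obtain ⟨⟨hlo, hhi⟩, t, hmt⟩ := hm
    rw [Finset.mem_image]
    refine ⟨t, ?_, hmt.symm⟩
    rw [Finset.mem_Icc]
    have habs : J * t.natAbs ≤ n - 1 := by
      have h1 : ((J:ℤ) * t).natAbs = J * t.natAbs := by
        rw [Int.natAbs_mul, Int.natAbs_natCast]
      have h2 : m.natAbs ≤ n - 1 := by omega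
      rw [hmt, h1] at h2
      exact h2
    have ht : t.natAbs ≤ T' := by
      rw [hT', Nat.le_div_iff_mul_le (by omega)]
      rw [Nat.mul_comm]
      exact habs
    omega
  have hstep : scoord n J ≤ ∑ t ∈ Finset.Icc (-(T':ℤ)) (T':ℤ), ((n:ℤ) - |(J:ℤ) * t|).toNat := by
    rw [scoord]
    refine le_trans (Finset.sum_le_sum_of_subset hsub) ?_
    rw [Finset.sum_image (by
      intro a _ b _ h
      exact mul_left_cancel₀ (by exact_mod_cast (by omega : J ≠ 0)) h)]
  have hterm : ∀ t ∈ Finset.Icc (-(T':ℤ)) (T':ℤ), (0:ℤ) ≤ (n:ℤ) - |(J:ℤ) * t| ∧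
      |(J:ℤ) * t| = (J:ℤ) * |t| := by
    intro t ht
    rw [Finset.mem_Icc] at ht
    have h1 : |(J:ℤ) * t| = (J:ℤ) * |t| := by
      rw [abs_mul, abs_of_nonneg (by positivity : (0:ℤ) ≤ (J:ℤ))]
    constructor
    · rw [h1]
      have h2 : |t| ≤ (T':ℤ) := abs_le.mpr ht
      have h3 : (J:ℤ) * |t| ≤ (J:ℤ) * (T':ℤ) :=
        mul_le_mul_of_nonneg_left h2 (by positivity)
      omega
    · exact h1
  have hcast : ((∑ t ∈ Finset.Icc (-(T':ℤ)) (T':ℤ), ((n:ℤ) - |(J:ℤ) * t|).toNat : ℕ) : ℤ) =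
      ∑ t ∈ Finset.Icc (-(T':ℤ)) (T':ℤ), ((n:ℤ) - (J:ℤ) * |t|) := by
    rw [Nat.cast_sum]
    apply Finset.sum_congr rfl
    intro t ht
    obtain ⟨hpos, habs⟩ := hterm t ht
    rw [← habs, Int.toNat_of_nonneg hpos]
  have hsum := sum_icc_abs T' (n:ℤ) (J:ℤ)
  have hfinal : (J:ℤ) * ((2*(T':ℤ)+1)*(n:ℤ) - (J:ℤ)*((T':ℤ)*((T':ℤ)+1))) ≤ 2 * (n:ℤ)^2 := by
    set x : ℤ := (J:ℤ) * (T':ℤ) with hx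
    have hx0 : 0 ≤ x := by positivity
    have hxn : x ≤ (n:ℤ) - 1 := hJTz
    have hJn' : (J:ℤ) ≤ (n:ℤ) - 1 := by
      have : ((J:ℕ):ℤ) ≤ ((n-1:ℕ):ℤ) := by exact_mod_cast hJn
      omega
    have heq : (J:ℤ) * ((2*(T':ℤ)+1)*(n:ℤ) - (J:ℤ)*((T':ℤ)*((T':ℤ)+1))) =
        2*x*(n:ℤ) + (J:ℤ)*(n:ℤ) - x*x - x*(J:ℤ) := by
      rw [hx]; ring
    rw [heq]
    nlinarith [sq_nonneg (x - (n:ℤ)), mul_nonneg (by omega : (0:ℤ) ≤ (n:ℤ) - (J:ℤ))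
      (by positivity : (0:ℤ) ≤ (n:ℤ)), mul_nonneg hx0 (by positivity : (0:ℤ) ≤ (J:ℤ))]
  calc (J:ℤ) * (scoord n J : ℤ)
      ≤ (J:ℤ) * ((∑ t ∈ Finset.Icc (-(T':ℤ)) (T':ℤ), ((n:ℤ) - |(J:ℤ) * t|).toNat : ℕ) : ℤ) := by
        apply mul_le_mul_of_nonneg_left _ (by positivity)
        exact_mod_cast hstep
    _ = (J:ℤ) * ((2*(T':ℤ)+1)*(n:ℤ) - (J:ℤ)*((T':ℤ)*((T':ℤ)+1))) := by
        rw [hcast, hsum]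
    _ ≤ 2 * (n:ℤ)^2 := hfinal

lemma basel (m : ℕ) : ∑ J ∈ Finset.Icc 1 m, (1:ℝ)/(J:ℝ)^2 ≤ 2 := by
  have key : ∀ m : ℕ, 1 ≤ m → ∑ J ∈ Finset.Icc 1 m, (1:ℝ)/(J:ℝ)^2 ≤ 2 - 1/(m:ℝ) := by
    intro m hm
    induction m, hm using Nat.le_induction with
    | base => norm_num
    | succ m hm ih =>
      have hnot : m + 1 ∉ Finset.Icc 1 m := by simp
      have hins : Finset.Icc 1 (m+1) = insert (m+1) (Finset.Icc 1 m) := by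
        ext x
        simp only [Finset.mem_Icc, Finset.mem_insert]
        omega
      rw [hins, Finset.sum_insert hnot]
      have hstep : (1:ℝ)/((m+1:ℕ):ℝ)^2 ≤ 1/(m:ℝ) - 1/((m:ℝ)+1) := by
        have hm0 : (0:ℝ) < (m:ℝ) := by exact_mod_cast hm
        have h1 : 1/(m:ℝ) - 1/((m:ℝ)+1) = 1/((m:ℝ)*((m:ℝ)+1)) := by
          field_simp
          ring
        rw [h1]
        push_cast
        apply div_le_div_of_nonneg_left (by norm_num) (by positivity)
        nlinarith
      push_cast at hstep ⊢
      linarith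
  rcases Nat.eq_zero_or_pos m with h | h
  · subst h; simp
  · have := key m h
    have : (0:ℝ) < 1/(m:ℝ) := by positivity
    linarith [key m h]

lemma choose_fact_le (J r' : ℕ) : ((J-1).choose r' : ℝ) * (r'.factorial : ℝ) ≤ (J:ℝ)^r' := by
  have h1 : (J-1).choose r' * r'.factorial ≤ J^r' := by
    calc (J-1).choose r' * r'.factorial = r'.factorial * (J-1).choose r' := Nat.mul_comm _ _
      _ = (J-1).descFactorial r' := (Nat.descFactorial_eq_factorial_mul_choose _ _).symm
      _ ≤ (J-1)^r' := Nat.descFactorial_le_pow _ _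
      _ ≤ J^r' := Nat.pow_le_pow_left (by omega) _
  exact_mod_cast h1

lemma nat_final {r k : ℕ} (hr : 3 ≤ r) (hrk : r ≤ k) : 2*(r*(r-1)) ≤ k * 2^r := by
  have h1 : r - 1 < 2^(r-1) := Nat.lt_two_pow_self (n := r-1)
  have h2 : 2*(r-1) ≤ 2^r := by
    have : 2^r = 2 * 2^(r-1) := by
      rw [← pow_succ']
      congr 1
      omega
    omega
  calc 2*(r*(r-1)) = r * (2*(r-1)) := by ring
    _ ≤ r * 2^r := Nat.mul_le_mul_left r h2
    _ ≤ k * 2^r := Nat.mul_le_mul_right _ hrk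

lemma upper_bound {n k r : ℕ} (hr : 3 ≤ r) (hrk : r ≤ k) (hn : 2 ≤ n) :
    (eH n k r : ℝ) ≤ (k:ℝ) * 2^(r+k) / (Nat.factorial r : ℝ) * (n:ℝ)^(2*k) := by
  have hk : 0 < k := by omega
  have hfac2 : (0:ℝ) < ((r-2).factorial : ℝ) := by exact_mod_cast (r-2).factorial_pos
  have hfacr : (0:ℝ) < (r.factorial : ℝ) := by exact_mod_cast r.factorial_pos
  have step1 : (eH n k r : ℝ) ≤
      ((∑ J ∈ Finset.Icc 1 (n-1), (scoord n J)^k * ((J-1).choose (r - 2)) : ℕ) : ℝ) := by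
    have h1 := eH_le_codes (n := n) (k := k) hr
    have h2 := codes_card_le (n := n) (k := k) (r := r) (by omega)
    have h3 := fiber_sum (n := n) (r := r) hk
    exact_mod_cast le_trans h1 (le_trans h2 h3)
  have step2 : ((∑ J ∈ Finset.Icc 1 (n-1), (scoord n J)^k * ((J-1).choose (r - 2)) : ℕ) : ℝ)
      ≤ ∑ J ∈ Finset.Icc 1 (n-1), ((2*(n:ℝ)^2)^k / ((r-2).factorial : ℝ)) * (1/(J:ℝ)^2) := by
    rw [Nat.cast_sum]
    apply Finset.sum_le_sum
    intro J hJ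
    rw [Finset.mem_Icc] at hJ
    obtain ⟨hJ1, hJn⟩ := hJ
    have hJ0 : (0:ℝ) < (J:ℝ) := by exact_mod_cast hJ1
    have hsc : (scoord n J : ℝ) ≤ 2*(n:ℝ)^2 / (J:ℝ) := by
      rw [le_div_iff₀ hJ0]
      have := scoord_mul_le hJ1 hJn hn
      have h2 : ((J:ℤ) * (scoord n J : ℤ) : ℤ) ≤ 2 * (n:ℤ)^2 := this
      have h3 : (J:ℝ) * (scoord n J : ℝ) ≤ 2 * (n:ℝ)^2 := by exact_mod_cast h2
      linarith
    have hch : (((J-1).choose (r - 2) : ℕ) : ℝ) ≤ (J:ℝ)^(r-2) / ((r-2).factorial : ℝ) := by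
      rw [le_div_iff₀ hfac2]
      exact choose_fact_le J (r-2)
    have hpow : (J:ℝ)^(r-2) * (J:ℝ)^2 ≤ (J:ℝ)^k := by
      rw [← pow_add]
      have hre : r - 2 + 2 = r := by omega
      rw [hre]
      exact pow_le_pow_right₀ (by exact_mod_cast hJ1) hrk
    have hinner : (J:ℝ)^(r-2)/((J:ℝ)^k * ((r-2).factorial : ℝ)) ≤
        1/((J:ℝ)^2 * ((r-2).factorial : ℝ)) := by
      rw [div_le_div_iff₀ (by positivity) (by positivity)]
      calc (J:ℝ)^(r-2) * ((J:ℝ)^2 * ((r-2).factorial : ℝ))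
          = ((J:ℝ)^(r-2) * (J:ℝ)^2) * ((r-2).factorial : ℝ) := by ring
        _ ≤ (J:ℝ)^k * ((r-2).factorial : ℝ) :=
            mul_le_mul_of_nonneg_right hpow (le_of_lt hfac2)
        _ = 1 * ((J:ℝ)^k * ((r-2).factorial : ℝ)) := by ring
    calc (((scoord n J)^k * ((J-1).choose (r - 2)) : ℕ) : ℝ)
        = ((scoord n J : ℕ):ℝ)^k * (((J-1).choose (r - 2) : ℕ):ℝ) := by push_cast; ring
      _ ≤ (2*(n:ℝ)^2/(J:ℝ))^k * ((J:ℝ)^(r-2) / ((r-2).factorial : ℝ)) := by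
          apply mul_le_mul _ hch (by positivity) (by positivity)
          exact pow_le_pow_left₀ (by positivity) hsc k
      _ = (2*(n:ℝ)^2)^k * ((J:ℝ)^(r-2)/((J:ℝ)^k * ((r-2).factorial : ℝ))) := by
          rw [div_pow]
          ring
      _ ≤ (2*(n:ℝ)^2)^k * (1/((J:ℝ)^2 * ((r-2).factorial : ℝ))) :=
          mul_le_mul_of_nonneg_left hinner (by positivity)
      _ = ((2*(n:ℝ)^2)^k / ((r-2).factorial : ℝ)) * (1/(J:ℝ)^2) := by ring
  have step3 : ∑ J ∈ Finset.Icc 1 (n-1), ((2*(n:ℝ)^2)^k / ((r-2).factorial : ℝ)) * (1/(J:ℝ)^2)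
      ≤ ((2*(n:ℝ)^2)^k / ((r-2).factorial : ℝ)) * 2 := by
    rw [← Finset.mul_sum]
    exact mul_le_mul_of_nonneg_left (basel (n-1)) (by positivity)
  have hratio : (2:ℝ)/(((r-2).factorial : ℕ) : ℝ) ≤ (k:ℝ)*2^r/((r.factorial : ℕ) : ℝ) := by
    rw [div_le_div_iff₀ hfac2 hfacr]
    have hnat : 2 * r.factorial ≤ k * 2^r * (r-2).factorial := by
      obtain ⟨s, rfl⟩ : ∃ s, r = s + 3 := ⟨r - 3, by omega⟩
      have h1 : (s+3).factorial = (s+3) * ((s+2) * (s+1).factorial) := by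
        rw [Nat.factorial_succ, Nat.factorial_succ]
      have h2 : (s+3) - 2 = s + 1 := by omega
      rw [h1, h2]
      have h3 := nat_final (r := s+3) (k := k) (by omega) hrk
      have h4 : (s+3) - 1 = s + 2 := by omega
      rw [h4] at h3
      calc 2 * ((s+3) * ((s+2) * (s+1).factorial)) =
            (2 * ((s+3) * (s+2))) * (s+1).factorial := by ring
        _ ≤ (k * 2^(s+3)) * (s+1).factorial := Nat.mul_le_mul_right _ h3
    exact_mod_cast hnat
  have step4 : ((2*(n:ℝ)^2)^k / ((r-2).factorial : ℝ)) * 2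
      ≤ (k:ℝ) * 2^(r+k) / (Nat.factorial r : ℝ) * (n:ℝ)^(2*k) := by
    calc ((2*(n:ℝ)^2)^k / ((r-2).factorial : ℝ)) * 2
        = (2/(((r-2).factorial : ℕ) : ℝ)) * (2^k * (n:ℝ)^(2*k)) := by
          rw [mul_pow, ← pow_mul]
          ring
      _ ≤ ((k:ℝ)*2^r/((r.factorial : ℕ) : ℝ)) * (2^k * (n:ℝ)^(2*k)) :=
          mul_le_mul_of_nonneg_right hratio (by positivity)
      _ = (k:ℝ) * 2^(r+k) / (Nat.factorial r : ℝ) * (n:ℝ)^(2*k) := by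
          rw [pow_add]
          ring
  linarith

end Collinear

/-- Claim 4.1(i) of the paper: if 3 ≤ r ≤ k ≤ 0.01·log₂ n then
n^(2k)/r^(2k) ≤ e(H(n,k,r)) ≤ (k·2^(r+k)/r!)·n^(2k). -/
theorem collinear_count_r_le_k :
    ∃ n₀ : ℕ, ∀ n : ℕ, n₀ ≤ n → ∀ r k : ℕ, 3 ≤ r → r ≤ k →
      (k : ℝ) ≤ 0.01 * Real.logb 2 (n : ℝ) →
      (n : ℝ) ^ (2 * k) / (r : ℝ) ^ (2 * k) ≤ (eH n k r : ℝ) ∧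
      (eH n k r : ℝ) ≤ (k : ℝ) * 2 ^ (r + k) / (Nat.factorial r : ℝ) * (n : ℝ) ^ (2 * k) := by
  refine ⟨0, fun n _ r k hr hrk hlog => ?_⟩
  have hk3 : (3:ℝ) ≤ (k:ℝ) := by exact_mod_cast le_trans hr hrk
  have hn1 : 1 ≤ n := by
    by_contra h
    have hn0 : n = 0 := by omega
    subst hn0
    rw [Nat.cast_zero, Real.logb, Real.log_zero, zero_div, mul_zero] at hlog
    linarith
  have hnpos : (0:ℝ) < (n:ℝ) := by exact_mod_cast hn1
  have hlogn : Real.logb 2 (n:ℝ) ≤ (n:ℝ) := by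
    rw [Real.logb_le_iff_le_rpow (by norm_num) hnpos]
    rw [Real.rpow_natCast]
    exact_mod_cast (Nat.lt_two_pow_self (n := n)).le
  have hkn : 100 * k ≤ n := by
    have h2 : (k:ℝ) ≤ 0.01 * (n:ℝ) := le_trans hlog (by nlinarith)
    have h3 : ((100 * k : ℕ) : ℝ) ≤ (n:ℝ) := by push_cast; linarith
    exact_mod_cast h3
  have hrn : r ≤ n := by
    have : r ≤ k := hrk
    omega
  have hn2 : 2 ≤ n := by omega
  exact ⟨Collinear.lower_bound hr hrk hrn, Collinear.upper_bound hr hrk hn2⟩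
end

section
/- There exists n₀ such that for all integers n ≥ n₀ and all integers k, r with r = k+1, 3 ≤ r and r, k ≤ 0.01·log₂ n, the number of r-element collinear subsets of the grid [n]^k = {1,…,n}^k ⊆ ℝ^k satisfies n^{2k}/r^{2k} ≤ e(H) ≤ (k·2^{r+k}/r!)·n^{2k}·log₂ n, where e(H) denotes the number of r-element subsets of [n]^k contained in a single line. -/
lemma exists_params {n k : ℕ} (hk : 2 ≤ k) (T : Set (Fin k → ℝ))
    (hTg : T ⊆ gridPts n k) (hTc : T.ncard = k + 1)
    (hline : ∃ L, IsLine L ∧ T ⊆ L) :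
    ∃ x : Fin k → ℕ, ∃ v : Fin k → ℤ, ∃ E : Finset ℕ,
      (∀ i, 1 ≤ x i ∧ x i ≤ n) ∧
      E.card = k ∧ (∀ d ∈ E, 1 ≤ d) ∧
      (∃ s, s ∈ E ∧ (∀ d ∈ E, d ≤ s) ∧ k ≤ s ∧
        (∀ i, (v i).natAbs * s ≤ n - 1) ∧ (∃ i, v i ≠ 0)) ∧
      T = (fun d : ℕ => fun i => ((x i : ℝ) + (d : ℝ) * (v i : ℝ))) '' ↑(insert 0 E) := by
  obtain ⟨L, ⟨u, v₀, hv₀, rfl⟩, hTL⟩ := hline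
  -- T is finite
  have hTfin : T.Finite := by
    rw [← Set.not_infinite]
    intro h
    rw [Set.Infinite.ncard h] at hTc
    omega
  set t : Finset (Fin k → ℝ) := hTfin.toFinset with ht_def
  have htT : (t : Set (Fin k → ℝ)) = T := hTfin.coe_toFinset
  have ht : t.card = k + 1 := by
    rw [← hTc, ← htT, Set.ncard_coe_finset]
  -- integerization
  set np : (Fin k → ℝ) → (Fin k → ℤ) := fun p i => ⌊p i⌋ with hnp_def
  have hnp : ∀ p ∈ T, ∀ i, ((np p i : ℝ) = p i) ∧ 1 ≤ np p i ∧ np p i ≤ n := by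
    intro p hp i
    obtain ⟨m, hm1, hmn, hpm⟩ := hTg hp i
    have : np p i = (m : ℤ) := by
      simp [hnp_def, hpm]
    refine ⟨?_, ?_, ?_⟩ <;> rw [this]
    · rw [hpm]; push_cast; ring
    · exact_mod_cast hm1
    · exact_mod_cast hmn
  -- line parametrisation
  have hparam : ∀ p ∈ T, ∃ s : ℝ, p = u + s • v₀ := fun p hp => hTL hp
  have hcrossR : ∀ p ∈ T, ∀ q ∈ T, ∀ p' ∈ T, ∀ q' ∈ T, ∀ i j,
      (p i - q i) * (p' j - q' j) = (p j - q j) * (p' i - q' i) := by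
    intro p hp q hq p' hp' q' hq' i j
    obtain ⟨a, rfl⟩ := hparam p hp
    obtain ⟨b, rfl⟩ := hparam q hq
    obtain ⟨a', rfl⟩ := hparam p' hp'
    obtain ⟨b', rfl⟩ := hparam q' hq'
    simp only [Pi.add_apply, Pi.smul_apply, smul_eq_mul]
    ring
  set tZ : Finset (Fin k → ℤ) := t.image np with htZ_def
  have hnp_inj : ∀ p ∈ T, ∀ q ∈ T, np p = np q → p = q := by
    intro p hp q hq h
    funext i
    rw [← (hnp p hp i).1, ← (hnp q hq i).1, h]
  have hmem_t : ∀ p, p ∈ t ↔ p ∈ T := by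
    intro p; rw [← htT]; simp
  have htZcard : tZ.card = k + 1 := by
    rw [htZ_def, Finset.card_image_of_injOn, ht]
    intro p hp q hq h
    exact hnp_inj p ((hmem_t p).mp hp) q ((hmem_t q).mp hq) h
  have htZmem : ∀ P ∈ tZ, ∃ p ∈ T, np p = P := by
    intro P hP
    obtain ⟨p, hp, rfl⟩ := Finset.mem_image.mp hP
    exact ⟨p, (hmem_t p).mp hp, rfl⟩
  have htZbounds : ∀ P ∈ tZ, ∀ i, 1 ≤ P i ∧ P i ≤ n := by
    intro P hP i
    obtain ⟨p, hp, rfl⟩ := htZmem P hP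
    exact (hnp p hp i).2
  have hcrossZ : ∀ P ∈ tZ, ∀ Q ∈ tZ, ∀ P' ∈ tZ, ∀ Q' ∈ tZ, ∀ i j,
      (P i - Q i) * (P' j - Q' j) = (P j - Q j) * (P' i - Q' i) := by
    intro P hP Q hQ P' hP' Q' hQ' i j
    obtain ⟨p, hp, rfl⟩ := htZmem P hP
    obtain ⟨q, hq, rfl⟩ := htZmem Q hQ
    obtain ⟨p', hp', rfl⟩ := htZmem P' hP'
    obtain ⟨q', hq', rfl⟩ := htZmem Q' hQ'
    have := hcrossR p hp q hq p' hp' q' hq' i j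
    have hcast : ∀ r (hr : r ∈ T) (i : Fin k), ((np r i : ℝ)) = r i := fun r hr i => (hnp r hr i).1
    apply @Int.cast_injective ℝ _
    push_cast
    rw [hcast p hp i, hcast p hp j, hcast q hq i, hcast q hq j,
      hcast p' hp' i, hcast p' hp' j, hcast q' hq' i, hcast q' hq' j]
    exact this
  -- a separating coordinate
  have h2 : ∃ P₀ ∈ tZ, ∃ Q₀ ∈ tZ, P₀ ≠ Q₀ := by
    have : 1 < tZ.card := by omega
    obtain ⟨P₀, hP₀, Q₀, hQ₀, hne⟩ := Finset.one_lt_card.mp this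
    exact ⟨P₀, hP₀, Q₀, hQ₀, hne⟩
  obtain ⟨P₀, hP₀, Q₀, hQ₀, hPQne⟩ := h2
  have hi₀ : ∃ i₀, P₀ i₀ ≠ Q₀ i₀ := by
    by_contra h
    push_neg at h
    exact hPQne (funext h)
  obtain ⟨i₀, hi₀⟩ := hi₀
  have hinj0 : ∀ P ∈ tZ, ∀ Q ∈ tZ, P i₀ = Q i₀ → P = Q := by
    intro P hP Q hQ h
    funext i
    have := hcrossZ P hP Q hQ P₀ hP₀ Q₀ hQ₀ i i₀
    rw [h, sub_self, zero_mul] at this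
    have h2 := mul_eq_zero.mp this
    rcases h2 with h2 | h2
    · omega
    · exact absurd (sub_eq_zero.mp h2) hi₀
  -- sorted enumeration by coordinate i₀
  set sZ : Finset ℤ := tZ.image (fun P => P i₀) with hsZ_def
  have hsZcard : sZ.card = k + 1 := by
    rw [hsZ_def, Finset.card_image_of_injOn, htZcard]
    intro P hP Q hQ h
    exact hinj0 P hP Q hQ h
  set ob := sZ.orderEmbOfFin hsZcard with hob_def
  have hob_mem : ∀ m, ob m ∈ sZ := fun m => Finset.orderEmbOfFin_mem sZ hsZcard m
  have hob_mono : StrictMono ob := (sZ.orderEmbOfFin hsZcard).strictMono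
  have hex : ∀ m : Fin (k + 1), ∃ P, P ∈ tZ ∧ P i₀ = ob m := by
    intro m
    obtain ⟨P, hP, hPi⟩ := Finset.mem_image.mp (hob_mem m)
    exact ⟨P, hP, hPi⟩
  choose EP hEPmem hEPcoord using hex
  have hEPinj : Function.Injective EP := by
    intro a b h
    apply hob_mono.injective
    rw [← hEPcoord a, ← hEPcoord b, h]
  -- differences
  set w : Fin k → (Fin k → ℤ) := fun m i => EP m.succ i - EP m.castSucc i with hw_def
  have hwpos : ∀ m : Fin k, 0 < w m i₀ := by
    intro m
    have : ob m.castSucc < ob m.succ := hob_mono (Fin.castSucc_lt_succ : m.castSucc < m.succ)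
    simp only [hw_def, hEPcoord]
    omega
  have hcross' : ∀ m m' : Fin k, ∀ i j, w m i * w m' j = w m j * w m' i := by
    intro m m' i j
    exact hcrossZ _ (hEPmem m.succ) _ (hEPmem m.castSucc) _ (hEPmem m'.succ) _ (hEPmem m'.castSucc) i j
  have hkpos : 0 < k := by omega
  set zero : Fin k := ⟨0, hkpos⟩ with hzero_def
  set g : ℕ := Finset.gcd Finset.univ (fun i => (w zero i).natAbs) with hg_def
  have hgdvd : ∀ i, (g : ℤ) ∣ w zero i := by
    intro i
    have h1 : g ∣ (w zero i).natAbs := Finset.gcd_dvd (Finset.mem_univ i)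
    exact Int.dvd_natAbs.mp (Int.natCast_dvd_natCast.mpr h1)
  have hgpos : 0 < g := by
    rcases Nat.eq_zero_or_pos g with h | h
    · exfalso
      have := Finset.gcd_eq_zero_iff.mp (hg_def ▸ h) i₀ (Finset.mem_univ i₀)
      have h2 := hwpos zero
      simp only [Int.natAbs_eq_zero] at this
      omega
    · exact h
  set v : Fin k → ℤ := fun i => w zero i / (g : ℤ) with hv_def
  have hgv : ∀ i, (g : ℤ) * v i = w zero i := fun i => Int.mul_ediv_cancel' (hgdvd i)
  have hvabs : ∀ i, (v i).natAbs = (w zero i).natAbs / g := by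
    intro i
    have h1 : (w zero i).natAbs = g * (v i).natAbs := by
      rw [← hgv i, Int.natAbs_mul, Int.natAbs_natCast]
    rw [h1, Nat.mul_div_cancel_left _ hgpos]
  have hprim : Finset.gcd Finset.univ (fun i => (v i).natAbs) = 1 := by
    have h1 : (fun i => (v i).natAbs) = fun i => (w zero i).natAbs / g := funext hvabs
    rw [h1, hg_def]
    refine Finset.gcd_div_eq_one (Finset.mem_univ i₀) ?_
    have hne : w zero i₀ ≠ 0 := by have := hwpos zero; omega
    simpa using hne
  have hvi₀pos : 0 < v i₀ := by
    have h1 := hgv i₀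
    have h2 := hwpos zero
    nlinarith [hgpos]
  have hvi₀ne : v i₀ ≠ 0 := by omega
  have hgne : (g : ℤ) ≠ 0 := by exact_mod_cast hgpos.ne'
  -- each difference is an integer multiple of v
  have hpar : ∀ (m : Fin k) (i : Fin k), w m i * v i₀ = w m i₀ * v i := by
    intro m i
    have h1 := hcross' m zero i i₀
    rw [← hgv i₀, ← hgv i] at h1
    have h2 : (g : ℤ) * (w m i * v i₀) = (g : ℤ) * (w m i₀ * v i) := by ring_nf; ring_nf at h1; linarith
    exact mul_left_cancel₀ hgne h2
  have hdvd : ∀ m : Fin k, v i₀ ∣ w m i₀ := by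
    intro m
    have habs : ∀ i, (v i₀).natAbs ∣ (w m i₀).natAbs * (v i).natAbs := by
      intro i
      have h1 : v i₀ ∣ w m i₀ * v i := ⟨w m i, by linarith [hpar m i]⟩
      have := Int.natAbs_dvd_natAbs.mpr h1
      rwa [Int.natAbs_mul] at this
    have h2 : (v i₀).natAbs ∣ Finset.univ.gcd (fun i => (w m i₀).natAbs * (v i).natAbs) :=
      Finset.dvd_gcd (fun i _ => habs i)
    have h3 : Finset.univ.gcd (fun i => (w m i₀).natAbs * (v i).natAbs)
        = (w m i₀).natAbs * Finset.univ.gcd (fun i => (v i).natAbs) := by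
      simpa using Finset.gcd_mul_left (s := (Finset.univ : Finset (Fin k)))
        (a := (w m i₀).natAbs) (f := fun i => (v i).natAbs)
    rw [h3, hprim, mul_one] at h2
    exact Int.natAbs_dvd_natAbs.mp h2
  set cInt : Fin k → ℤ := fun m => w m i₀ / v i₀ with hcInt_def
  have hcv : ∀ m, cInt m * v i₀ = w m i₀ := fun m => Int.ediv_mul_cancel (hdvd m)
  have hcpos : ∀ m, 0 < cInt m := by
    intro m
    have h1 := hcv m
    have h2 := hwpos m
    nlinarith [hvi₀pos]
  have hwm : ∀ m i, w m i = cInt m * v i := by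
    intro m i
    have h1 := hpar m i
    rw [← hcv m] at h1
    have h2 : w m i * v i₀ = (cInt m * v i) * v i₀ := by linarith [h1]; 
    exact mul_right_cancel₀ hvi₀ne h2
  -- cumulative offsets
  set cc : ℕ → ℤ := fun j => if h : j < k then cInt ⟨j, h⟩ else 1 with hcc_def
  have hccpos : ∀ j, 0 < cc j := by
    intro j; simp only [hcc_def]; split
    · exact hcpos _
    · exact one_pos
  set D : ℕ → ℤ := fun M => ∑ j ∈ Finset.range M, cc j with hD_def
  have hD0 : D 0 = 0 := by simp [hD_def]
  have hDsucc : ∀ M, D (M + 1) = D M + cc M := by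
    intro M; simp [hD_def, Finset.sum_range_succ]
  have hDmono : StrictMono D :=
    strictMono_nat_of_lt_succ (fun M => by rw [hDsucc]; linarith [hccpos M])
  have hDge : ∀ M : ℕ, (M : ℤ) ≤ D M := by
    intro M
    induction M with
    | zero => simp [hD0]
    | succ M ih => rw [hDsucc]; push_cast; linarith [hccpos M]
  have hDnonneg : ∀ M, 0 ≤ D M := fun M => le_trans (by positivity) (hDge M)
  have hEPtele : ∀ M (h : M < k + 1), ∀ i,
      EP ⟨M, h⟩ i = EP ⟨0, Nat.succ_pos k⟩ i + D M * v i := by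
    intro M
    induction M with
    | zero => intro h i; simp [hD0]
    | succ M ih =>
      intro h i
      have hMk : M < k := by omega
      have hstep : EP ⟨M + 1, h⟩ i = EP ⟨M, by omega⟩ i + w ⟨M, hMk⟩ i := by
        have h1 : (⟨M, hMk⟩ : Fin k).succ = ⟨M + 1, h⟩ := rfl
        have h2 : (⟨M, hMk⟩ : Fin k).castSucc = ⟨M, by omega⟩ := rfl
        simp [hw_def, h1, h2]
      rw [hstep, ih (by omega) i, hwm ⟨M, hMk⟩ i, hDsucc]
      have hccM : cc M = cInt ⟨M, hMk⟩ := by simp [hcc_def, hMk]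
      rw [hccM]; ring
  -- the parameters
  set x : Fin k → ℕ := fun i => (EP ⟨0, Nat.succ_pos k⟩ i).toNat with hx_def
  have hEP0 := htZbounds _ (hEPmem ⟨0, Nat.succ_pos k⟩)
  have hx : ∀ i, 1 ≤ x i ∧ x i ≤ n := by
    intro i
    have := hEP0 i
    constructor <;> (simp only [hx_def]; omega)
  set E : Finset ℕ := (Finset.Icc 1 k).image (fun M => (D M).toNat) with hE_def
  set s : ℕ := (D k).toNat with hs_def
  have hDcast : ∀ M, ((D M).toNat : ℤ) = D M := fun M => Int.toNat_of_nonneg (hDnonneg M)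
  have hEcard : E.card = k := by
    rw [hE_def, Finset.card_image_of_injOn, Nat.card_Icc]
    · omega
    · intro a _ b _ h
      have : D a = D b := by
        rw [← hDcast a, ← hDcast b]
        exact congrArg (fun z : ℕ => (z : ℤ)) h
      exact hDmono.injective this
  have hE1 : ∀ d ∈ E, 1 ≤ d := by
    intro d hd
    rw [hE_def] at hd
    obtain ⟨M, hM, rfl⟩ := Finset.mem_image.mp hd
    have h1 := (Finset.mem_Icc.mp hM).1
    have := hDge M
    omega
  have hsE : s ∈ E := by
    rw [hE_def, hs_def]
    exact Finset.mem_image_of_mem _ (Finset.mem_Icc.mpr ⟨by omega, le_rfl⟩)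
  have hsle : ∀ d ∈ E, d ≤ s := by
    intro d hd
    rw [hE_def] at hd
    obtain ⟨M, hM, rfl⟩ := Finset.mem_image.mp hd
    have h2 := (Finset.mem_Icc.mp hM).2
    have := hDmono.monotone h2
    rw [hs_def]
    omega
  have hks : k ≤ s := by have := hDge k; rw [hs_def]; omega
  have hn1 : 1 ≤ n := by have := hEP0 zero; omega
  have hbound : ∀ i, (v i).natAbs * s ≤ n - 1 := by
    intro i
    have h1 := htZbounds _ (hEPmem ⟨k, by omega⟩) i
    have h2 := hEP0 i
    have h3 := hEPtele k (by omega) i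
    have habs : |D k * v i| ≤ (n : ℤ) - 1 := by
      rw [abs_le]; omega
    have hnat : |v i| * (s : ℤ) = |D k * v i| := by
      rw [abs_mul, abs_of_nonneg (hDnonneg k), hs_def, hDcast k]
      ring
    zify [hn1]
    calc |v i| * (s : ℤ) = |D k * v i| := hnat
      _ ≤ (n : ℤ) - 1 := habs
  -- reconstruction
  have hcastEP : ∀ M (h : M < k + 1) (i : Fin k),
      ((EP ⟨M, h⟩ i : ℤ) : ℝ) = (x i : ℝ) + (((D M).toNat : ℕ) : ℝ) * ((v i : ℤ) : ℝ) := by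
    intro M h i
    have e0 : ((x i : ℕ) : ℝ) = ((EP ⟨0, Nat.succ_pos k⟩ i : ℤ) : ℝ) := by
      have : ((x i : ℕ) : ℤ) = EP ⟨0, Nat.succ_pos k⟩ i := by
        simp only [hx_def]; have := hEP0 i; omega
      exact_mod_cast congrArg (fun z : ℤ => (z : ℝ)) this
    have e1 : (((D M).toNat : ℕ) : ℝ) = ((D M : ℤ) : ℝ) := by
      exact_mod_cast congrArg (fun z : ℤ => (z : ℝ)) (hDcast M)
    rw [hEPtele M h i, e0, e1]
    push_cast
    ring
  have himgEP : Finset.univ.image EP = tZ := by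
    apply Finset.eq_of_subset_of_card_le
    · intro Q hQ
      obtain ⟨m, _, rfl⟩ := Finset.mem_image.mp hQ
      exact hEPmem m
    · rw [htZcard, Finset.card_image_of_injective _ hEPinj, Finset.card_univ, Fintype.card_fin]
  have himg : T = (fun d : ℕ => fun i => ((x i : ℝ) + (d : ℝ) * (v i : ℝ))) '' ↑(insert 0 E) := by
    ext p
    constructor
    · intro hp
      have hnpmem : np p ∈ tZ := Finset.mem_image_of_mem np ((hmem_t p).mpr hp)
      rw [← himgEP] at hnpmem
      obtain ⟨m, _, hm⟩ := Finset.mem_image.mp hnpmem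
      obtain ⟨M, hM⟩ := m
      refine ⟨(D M).toNat, ?_, ?_⟩
      · simp only [Finset.coe_insert, Set.mem_insert_iff, Finset.mem_coe]
        rcases Nat.eq_zero_or_pos M with h0 | h0
        · left; subst h0; simp [hD0]
        · right; rw [hE_def]
          exact Finset.mem_image_of_mem _ (Finset.mem_Icc.mpr ⟨h0, by omega⟩)
      · funext i
        have := (hnp p hp i).1
        rw [← this, ← congrFun hm i, hcastEP M hM i]
    · rintro ⟨d, hd, rfl⟩
      have hMex : ∃ M, ∃ h : M < k + 1, (D M).toNat = d := by
        simp only [Finset.coe_insert, Set.mem_insert_iff, Finset.mem_coe] at hd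
        rcases hd with rfl | hd
        · exact ⟨0, by omega, by simp [hD0]⟩
        · rw [hE_def] at hd
          obtain ⟨M, hM, rfl⟩ := Finset.mem_image.mp hd
          exact ⟨M, by have := (Finset.mem_Icc.mp hM).2; omega, rfl⟩
      obtain ⟨M, hM, rfl⟩ := hMex
      obtain ⟨q, hq, hnq⟩ := htZmem _ (hEPmem ⟨M, hM⟩)
      have heq : (fun i => (x i : ℝ) + (((D M).toNat : ℕ) : ℝ) * ((v i : ℤ) : ℝ)) = q := by
        funext i
        rw [← hcastEP M hM i, ← congrFun hnq i, (hnp q hq i).1]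
      exact Set.mem_of_eq_of_mem (by exact heq) hq
  exact ⟨x, v, E, hx, hEcard, hE1, ⟨s, hsE, hsle, hks, hbound, ⟨i₀, hvi₀ne⟩⟩, himg⟩

noncomputable def recon {k : ℕ} (p : (Fin k → ℕ) × (Fin k → ℤ) × Finset ℕ) :
    Set (Fin k → ℝ) :=
  (fun d : ℕ => fun i => ((p.1 i : ℝ) + (d : ℝ) * (p.2.1 i : ℝ))) '' ↑(insert 0 p.2.2)

noncomputable def Fs (n k s : ℕ) : Finset ((Fin k → ℕ) × (Fin k → ℤ) × Finset ℕ) :=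
  (Fintype.piFinset fun _ : Fin k => Finset.Icc 1 n) ×ˢ
    ((Fintype.piFinset fun _ : Fin k =>
      Finset.Icc (-(((n - 1) / s : ℕ) : ℤ)) (((n - 1) / s : ℕ) : ℤ)) ×ˢ
    (((Finset.Icc 1 s).powersetCard k).filter (fun A => s ∈ A)))

noncomputable def Fbig (n k : ℕ) : Finset ((Fin k → ℕ) × (Fin k → ℤ) × Finset ℕ) :=
  (Finset.Icc k (n - 1)).biUnion (Fs n k)

lemma exists_params_mem {n k : ℕ} (hk : 2 ≤ k) (T : Set (Fin k → ℝ))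
    (hTg : T ⊆ gridPts n k) (hTc : T.ncard = k + 1)
    (hline : ∃ L, IsLine L ∧ T ⊆ L) :
    ∃ p, p ∈ Fbig n k ∧ T = recon p := by
  obtain ⟨x, v, E, hx, hEcard, hE1, ⟨s, hsE, hsle, hks, hbound, ⟨iv, hiv⟩⟩, himg⟩ :=
    exists_params hk T hTg hTc hline
  have hspos : 0 < s := by omega
  have hsn1 : s ≤ n - 1 := by
    have h1 := hbound iv
    have h2 : 1 ≤ (v iv).natAbs := by
      rcases Nat.eq_zero_or_pos (v iv).natAbs with h | h
      · exact absurd (Int.natAbs_eq_zero.mp h) hiv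
      · exact h
    calc s = 1 * s := (one_mul s).symm
      _ ≤ (v iv).natAbs * s := Nat.mul_le_mul_right s h2
      _ ≤ n - 1 := h1
  refine ⟨(x, v, E), ?_, himg⟩
  rw [Fbig, Finset.mem_biUnion]
  refine ⟨s, Finset.mem_Icc.mpr ⟨hks, hsn1⟩, ?_⟩
  rw [Fs, Finset.mem_product]
  constructor
  · rw [Fintype.mem_piFinset]
    intro i
    exact Finset.mem_Icc.mpr (hx i)
  rw [Finset.mem_product]
  constructor
  · rw [Fintype.mem_piFinset]
    intro i
    have h1 := hbound i
    have h2 : (v i).natAbs ≤ (n - 1) / s := by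
      rw [Nat.le_div_iff_mul_le hspos]
      exact h1
    rw [Finset.mem_Icc, ← abs_le]
    calc |v i| = ((v i).natAbs : ℤ) := (Int.abs_eq_natAbs _)
      _ ≤ (((n - 1) / s : ℕ) : ℤ) := by exact_mod_cast h2
  · rw [Finset.mem_filter, Finset.mem_powersetCard]
    exact ⟨⟨fun d hd => Finset.mem_Icc.mpr ⟨hE1 d hd, hsle d hd⟩, hEcard⟩, hsE⟩

lemma eH_le_card {n k : ℕ} (hk : 2 ≤ k) : eH n k (k + 1) ≤ (Fbig n k).card := by
  classical
  rw [eH]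
  set S := {T : Set (Fin k → ℝ) | T ⊆ gridPts n k ∧ T.ncard = (k + 1 : ℕ) ∧
    ∃ L : Set (Fin k → ℝ), IsLine L ∧ T ⊆ L} with hS_def
  set f : Set (Fin k → ℝ) → (Fin k → ℕ) × (Fin k → ℤ) × Finset ℕ := fun T =>
    if h : ∃ p, p ∈ Fbig n k ∧ T = recon p then h.choose else default with hf_def
  have hkey : ∀ T ∈ S, ∃ p, p ∈ Fbig n k ∧ T = recon p := by
    rintro T ⟨h1, h2, h3⟩
    exact exists_params_mem hk T h1 (by exact_mod_cast h2) h3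
  have h1 : ∀ T ∈ S, f T ∈ (↑(Fbig n k) : Set ((Fin k → ℕ) × (Fin k → ℤ) × Finset ℕ)) := by
    intro T hT
    have h := hkey T hT
    simp only [hf_def, dif_pos h]
    exact h.choose_spec.1
  have hrec : ∀ T ∈ S, T = recon (f T) := by
    intro T hT
    have h := hkey T hT
    simp only [hf_def, dif_pos h]
    exact h.choose_spec.2
  have h2 : Set.InjOn f S := by
    intro T hT T' hT' h
    rw [hrec T hT, hrec T' hT', h]
  have := Set.ncard_le_ncard_of_injOn f h1 h2 (Finset.finite_toSet _)
  rwa [Set.ncard_coe_finset] at this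

lemma card_Fbig_le {n k : ℕ} (hk : 1 ≤ k) :
    (Fbig n k).card ≤
      ∑ s ∈ Finset.Icc k (n - 1), n ^ k * ((2 * ((n - 1) / s) + 1) ^ k * (s - 1).choose (k - 1)) := by
  refine le_trans (Finset.card_biUnion_le) (Finset.sum_le_sum ?_)
  intro s hs
  have hs1 : 1 ≤ s := le_trans hk (Finset.mem_Icc.mp hs).1
  rw [Fs, Finset.card_product, Finset.card_product]
  have c1 : (Fintype.piFinset fun _ : Fin k => Finset.Icc 1 n).card = n ^ k := by
    rw [Fintype.card_piFinset]
    simp [Nat.card_Icc]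
  have c2 : (Fintype.piFinset fun _ : Fin k =>
      Finset.Icc (-(((n - 1) / s : ℕ) : ℤ)) (((n - 1) / s : ℕ) : ℤ)).card
      = (2 * ((n - 1) / s) + 1) ^ k := by
    rw [Fintype.card_piFinset]
    have : (Finset.Icc (-(((n - 1) / s : ℕ) : ℤ)) (((n - 1) / s : ℕ) : ℤ)).card
        = 2 * ((n - 1) / s) + 1 := by
      rw [Int.card_Icc]
      omega
    simp only [this]
    rw [Finset.prod_const, Finset.card_univ, Fintype.card_fin]
  have c3 : ((((Finset.Icc 1 s).powersetCard k).filter (fun A => s ∈ A))).card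
      ≤ (s - 1).choose (k - 1) := by
    have := Finset.card_le_card_of_injOn (fun A => A.erase s)
      (s := (((Finset.Icc 1 s).powersetCard k).filter (fun A => s ∈ A)))
      (t := (Finset.Icc 1 (s - 1)).powersetCard (k - 1))
      (by
        intro A hA
        rw [Finset.mem_coe, Finset.mem_filter, Finset.mem_powersetCard] at hA
        obtain ⟨⟨hsub, hcard⟩, hmem⟩ := hA
        rw [Finset.mem_coe, Finset.mem_powersetCard]
        constructor
        · intro d hd
          rw [Finset.mem_erase] at hd
          have := Finset.mem_Icc.mp (hsub hd.2)
          rw [Finset.mem_Icc]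
          omega
        · rw [Finset.card_erase_of_mem hmem, hcard])
      (by
        intro A hA A' hA' h
        rw [Finset.mem_coe, Finset.mem_filter] at hA hA'
        have e1 : insert s (A.erase s) = A := Finset.insert_erase hA.2
        have e2 : insert s (A'.erase s) = A' := Finset.insert_erase hA'.2
        have h' : A.erase s = A'.erase s := h
        rw [← e1, ← e2, h'])
    calc ((((Finset.Icc 1 s).powersetCard k).filter (fun A => s ∈ A))).card
        ≤ ((Finset.Icc 1 (s - 1)).powersetCard (k - 1)).card := this
      _ = (s - 1).choose (k - 1) := by
          rw [Finset.card_powersetCard, Nat.card_Icc]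
          norm_num
  rw [c1, c2]
  exact Nat.mul_le_mul_left _ (Nat.mul_le_mul_left _ c3)

lemma harm_bound {n k : ℕ} (hk : 1 ≤ k) :
    ∑ s ∈ Finset.Icc k (n - 1), (1 / (s : ℝ)) ≤ 1 + Real.log n := by
  have h1 : ∑ s ∈ Finset.Icc k (n - 1), (1 / (s : ℝ)) ≤ ∑ s ∈ Finset.Icc 1 n, (1 / (s : ℝ)) := by
    apply Finset.sum_le_sum_of_subset_of_nonneg
    · intro s hs
      rw [Finset.mem_Icc] at hs ⊢
      omega
    · intro i _ _
      positivity
  have h2 : ∑ s ∈ Finset.Icc 1 n, (1 / (s : ℝ)) = (harmonic n : ℝ) := by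
    rw [harmonic_eq_sum_Icc]
    push_cast
    apply Finset.sum_congr rfl
    intro i _
    rw [one_div]
  calc ∑ s ∈ Finset.Icc k (n - 1), (1 / (s : ℝ)) ≤ ∑ s ∈ Finset.Icc 1 n, (1 / (s : ℝ)) := h1
    _ = (harmonic n : ℝ) := h2
    _ ≤ 1 + Real.log n := harmonic_le_one_add_log n

lemma sum_real_bound {n k : ℕ} (hk : 2 ≤ k) (hn : 2 ≤ n) :
    ((∑ s ∈ Finset.Icc k (n - 1),
        n ^ k * ((2 * ((n - 1) / s) + 1) ^ k * (s - 1).choose (k - 1)) : ℕ) : ℝ)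
      ≤ 3 ^ k * (n : ℝ) ^ (2 * k) / (Nat.factorial (k - 1) : ℝ) * (1 + Real.log n) := by
  have key : ∀ s ∈ Finset.Icc k (n - 1),
      ((n ^ k * ((2 * ((n - 1) / s) + 1) ^ k * (s - 1).choose (k - 1)) : ℕ) : ℝ)
        ≤ 3 ^ k * (n : ℝ) ^ (2 * k) / (Nat.factorial (k - 1) : ℝ) * (1 / (s : ℝ)) := by
    intro s hs
    rw [Finset.mem_Icc] at hs
    have hs1 : 1 ≤ s := le_trans (by omega : 1 ≤ k) hs.1
    have hsn : s ≤ n := by omega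
    have hspos : (0 : ℝ) < s := by positivity
    have hnpos : (0 : ℝ) < n := by positivity
    have hbox : ((2 * ((n - 1) / s) + 1 : ℕ) : ℝ) ≤ 3 * (n : ℝ) / s := by
      have hd : (((n - 1) / s : ℕ) : ℝ) ≤ (n : ℝ) / s := by
        calc (((n - 1) / s : ℕ) : ℝ) ≤ ((n - 1 : ℕ) : ℝ) / (s : ℝ) := Nat.cast_div_le
          _ ≤ (n : ℝ) / s := by
              gcongr
              push_cast
              omega
      have h3 : (1 : ℝ) ≤ (n : ℝ) / s := (one_le_div hspos).mpr (by exact_mod_cast hsn)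
      push_cast
      rw [mul_div_assoc]
      linarith
    have hch : (((s - 1).choose (k - 1) : ℕ) : ℝ)
        ≤ (s : ℝ) ^ (k - 1) / (Nat.factorial (k - 1) : ℝ) := by
      calc (((s - 1).choose (k - 1) : ℕ) : ℝ)
          ≤ ((s - 1 : ℕ) : ℝ) ^ (k - 1) / (Nat.factorial (k - 1) : ℝ) :=
            Nat.choose_le_pow_div (k - 1) (s - 1)
        _ ≤ (s : ℝ) ^ (k - 1) / (Nat.factorial (k - 1) : ℝ) := by
            gcongr
            push_cast
            omega
    have hfac : (0 : ℝ) < (Nat.factorial (k - 1) : ℝ) := by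
      exact_mod_cast Nat.factorial_pos (k - 1)
    have hb1 : (((2 * ((n - 1) / s) + 1 : ℕ)) : ℝ) ^ k ≤ (3 * (n : ℝ) / s) ^ k :=
      pow_le_pow_left₀ (by positivity) hbox k
    have step1 : ((n ^ k * ((2 * ((n - 1) / s) + 1) ^ k * (s - 1).choose (k - 1)) : ℕ) : ℝ)
        ≤ (n : ℝ) ^ k * ((3 * (n : ℝ) / s) ^ k
          * ((s : ℝ) ^ (k - 1) / (Nat.factorial (k - 1) : ℝ))) := by
      have h1 := mul_le_mul hb1 hch (by positivity) (by positivity)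
      have h2 := mul_le_mul_of_nonneg_left h1 (by positivity : (0 : ℝ) ≤ (n : ℝ) ^ k)
      push_cast
      push_cast at h2
      exact h2
    refine le_trans step1 (le_of_eq ?_)
    have hsk : (s : ℝ) ^ (k - 1) * s = (s : ℝ) ^ k := by
      rw [← pow_succ]
      congr 1
      omega
    have h2k : (n : ℝ) ^ (2 * k) = (n : ℝ) ^ k * (n : ℝ) ^ k := by
      rw [← pow_add]
      congr 1
      omega
    have e1 : (3 * (n : ℝ) / s) ^ k = 3 ^ k * (n : ℝ) ^ k / (s : ℝ) ^ k := by
      rw [div_pow, mul_pow]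
    have hsne : (s : ℝ) ≠ 0 := ne_of_gt hspos
    have hane : (s : ℝ) ^ (k - 1) ≠ 0 := by positivity
    have hfne : (Nat.factorial (k - 1) : ℝ) ≠ 0 := ne_of_gt hfac
    rw [e1, h2k, ← hsk]
    field_simp
  calc ((∑ s ∈ Finset.Icc k (n - 1),
        n ^ k * ((2 * ((n - 1) / s) + 1) ^ k * (s - 1).choose (k - 1)) : ℕ) : ℝ)
      = ∑ s ∈ Finset.Icc k (n - 1),
        ((n ^ k * ((2 * ((n - 1) / s) + 1) ^ k * (s - 1).choose (k - 1)) : ℕ) : ℝ) := by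
        push_cast; rfl
    _ ≤ ∑ s ∈ Finset.Icc k (n - 1),
        3 ^ k * (n : ℝ) ^ (2 * k) / (Nat.factorial (k - 1) : ℝ) * (1 / (s : ℝ)) :=
        Finset.sum_le_sum key
    _ = 3 ^ k * (n : ℝ) ^ (2 * k) / (Nat.factorial (k - 1) : ℝ)
        * ∑ s ∈ Finset.Icc k (n - 1), (1 / (s : ℝ)) := by
        rw [Finset.mul_sum]
    _ ≤ 3 ^ k * (n : ℝ) ^ (2 * k) / (Nat.factorial (k - 1) : ℝ) * (1 + Real.log n) := by
        apply mul_le_mul_of_nonneg_left (harm_bound (by omega))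
        positivity

lemma aux_ind : ∀ k : ℕ, 2 ≤ k → ((k : ℝ) + 1) * 3 ^ k ≤ (20 / 7) * 4 ^ k := by
  intro k hk
  induction k with
  | zero => omega
  | succ m ih =>
    rcases Nat.lt_or_ge m 2 with h | h
    · interval_cases m
      · omega
      · push_cast
        norm_num
    · have h1 := ih h
      have h2 : (0 : ℝ) < 3 ^ m := by positivity
      have h3 : (2 : ℝ) ≤ m := by exact_mod_cast h
      have h5 : (0 : ℝ) ≤ ((m : ℝ) - 2) * 3 ^ m := mul_nonneg (by linarith) h2.le
      push_cast
      rw [pow_succ, pow_succ]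
      nlinarith [h1, h5]

lemma final_upper {n k : ℕ} (hk : 2 ≤ k) (hlog : 300 ≤ Real.logb 2 n) :
    3 ^ k * (n : ℝ) ^ (2 * k) / (Nat.factorial (k - 1) : ℝ) * (1 + Real.log n)
      ≤ (k : ℝ) * 2 ^ ((k + 1) + k) / (Nat.factorial (k + 1) : ℝ) * (n : ℝ) ^ (2 * k)
        * Real.logb 2 n := by
  have hlog2pos : (0 : ℝ) < Real.log 2 := Real.log_pos (by norm_num)
  have hln : Real.log n = Real.logb 2 n * Real.log 2 := by
    rw [Real.logb]
    field_simp
  have hl2lb : (0.6931471803 : ℝ) < Real.log 2 := Real.log_two_gt_d9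
  have hl2ub : Real.log 2 < 0.6931471808 := Real.log_two_lt_d9
  have hLb : (0 : ℝ) < Real.logb 2 n := lt_of_lt_of_le (by norm_num) hlog
  have hlnlb : (207 : ℝ) ≤ Real.log n := by
    rw [hln]
    nlinarith
  have h1ln : 1 + Real.log n ≤ (208 / 207) * Real.log n := by linarith
  have hfk1 : (0 : ℝ) < (Nat.factorial (k - 1) : ℝ) := by
    exact_mod_cast Nat.factorial_pos _
  have hkpos : (0 : ℝ) < (k : ℝ) := by
    have : (2 : ℝ) ≤ (k : ℝ) := by exact_mod_cast hk
    linarith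
  have hfact : (Nat.factorial (k + 1) : ℝ) = ((k : ℝ) + 1) * k * (Nat.factorial (k - 1) : ℝ) := by
    have h1 : k - 1 + 1 = k := by omega
    have h2 : Nat.factorial (k + 1) = (k + 1) * (k * Nat.factorial (k - 1)) := by
      rw [Nat.factorial_succ]
      congr 1
      conv_lhs => rw [← h1]
      rw [Nat.factorial_succ, h1]
    rw [h2]
    push_cast
    ring
  have hpow : (2 : ℝ) ^ ((k + 1) + k) = 2 * 4 ^ k := by
    have h1 : (k + 1) + k = 2 * k + 1 := by omega
    rw [h1, pow_succ, pow_mul]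
    norm_num
    ring
  have haux := aux_ind k hk
  have hcoef : (208 / 207 : ℝ) * Real.log 2 ≤ 0.7 := by nlinarith
  have core : 3 ^ k / (Nat.factorial (k - 1) : ℝ) * (1 + Real.log n)
      ≤ (k : ℝ) * 2 ^ ((k + 1) + k) / (Nat.factorial (k + 1) : ℝ) * Real.logb 2 n := by
    rw [hfact, hpow]
    have hRHS : (k : ℝ) * (2 * 4 ^ k) / (((k : ℝ) + 1) * k * (Nat.factorial (k - 1) : ℝ))
        = 2 * 4 ^ k / (((k : ℝ) + 1) * (Nat.factorial (k - 1) : ℝ)) := by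
      field_simp
    rw [hRHS]
    rw [div_mul_eq_mul_div, div_mul_eq_mul_div, div_le_div_iff₀ (by positivity) (by positivity)]
    have step : 3 ^ k * (1 + Real.log n) * ((k : ℝ) + 1) ≤ 2 * 4 ^ k * Real.logb 2 n := by
      have hb1 : ((k : ℝ) + 1) * 3 ^ k * ((208 / 207) * Real.log 2)
          ≤ ((20 / 7) * 4 ^ k) * 0.7 := by
        apply mul_le_mul haux hcoef (by positivity) (by positivity)
      calc 3 ^ k * (1 + Real.log n) * ((k : ℝ) + 1)
          ≤ 3 ^ k * ((208 / 207) * Real.log n) * ((k : ℝ) + 1) := by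
            gcongr 3 ^ k * ?_ * ((k : ℝ) + 1)
        _ = (((k : ℝ) + 1) * 3 ^ k * ((208 / 207) * Real.log 2)) * Real.logb 2 n := by
            rw [hln]
            ring
        _ ≤ (((20 / 7) * 4 ^ k) * 0.7) * Real.logb 2 n := by
            exact mul_le_mul_of_nonneg_right hb1 hLb.le
        _ = 2 * 4 ^ k * Real.logb 2 n := by ring
    nlinarith [step, hfk1, mul_le_mul_of_nonneg_right step hfk1.le]
  have hX : (0 : ℝ) ≤ (n : ℝ) ^ (2 * k) := by positivity
  have hmul := mul_le_mul_of_nonneg_right core hX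
  calc 3 ^ k * (n : ℝ) ^ (2 * k) / (Nat.factorial (k - 1) : ℝ) * (1 + Real.log n)
      = (3 ^ k / (Nat.factorial (k - 1) : ℝ) * (1 + Real.log n)) * (n : ℝ) ^ (2 * k) := by
        ring
    _ ≤ ((k : ℝ) * 2 ^ ((k + 1) + k) / (Nat.factorial (k + 1) : ℝ) * Real.logb 2 n)
        * (n : ℝ) ^ (2 * k) := hmul
    _ = (k : ℝ) * 2 ^ ((k + 1) + k) / (Nat.factorial (k + 1) : ℝ) * (n : ℝ) ^ (2 * k)
        * Real.logb 2 n := by ring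

lemma grid_finite (n k : ℕ) : (gridPts n k).Finite := by
  have hsub : gridPts n k ⊆
      (fun f : Fin k → ℕ => fun i => (f i : ℝ)) '' (Set.pi Set.univ fun _ => Set.Icc 1 n) := by
    intro p hp
    choose f hf1 hf2 hf3 using hp
    exact ⟨f, fun i _ => Set.mem_Icc.mpr ⟨hf1 i, hf2 i⟩, by funext i; exact (hf3 i).symm⟩
  exact ((Set.Finite.pi fun _ => Set.finite_Icc _ _).image _).subset hsub

lemma eHset_finite (n k r : ℕ) :
    {T : Set (Fin k → ℝ) | T ⊆ gridPts n k ∧ T.ncard = r ∧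
      ∃ L : Set (Fin k → ℝ), IsLine L ∧ T ⊆ L}.Finite := by
  apply Set.Finite.subset (Set.Finite.finite_subsets (grid_finite n k))
  intro T hT
  exact hT.1

lemma lower_card {n k : ℕ} (hk : 2 ≤ k) (hn : 1 ≤ n) :
    (n.choose (k + 1)) * n ^ (k - 1) ≤ eH n k (k + 1) := by
  classical
  have hkpos : 0 < k := by omega
  set i0 : Fin k := ⟨0, hkpos⟩ with hi0_def
  set Dl : Finset ((Finset ℕ) × (Fin k → ℕ)) :=
    ((Finset.Icc 1 n).powersetCard (k + 1)) ×ˢ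
      (Fintype.piFinset fun i => if i = i0 then ({1} : Finset ℕ) else Finset.Icc 1 n)
    with hDl_def
  have hDlcard : Dl.card = (n.choose (k + 1)) * n ^ (k - 1) := by
    rw [hDl_def, Finset.card_product, Finset.card_powersetCard, Nat.card_Icc]
    have h1 : n + 1 - 1 = n := by omega
    rw [h1]
    congr 1
    rw [Fintype.card_piFinset]
    rw [← Finset.mul_prod_erase Finset.univ _ (Finset.mem_univ i0)]
    rw [if_pos rfl, Finset.card_singleton, one_mul]
    have hcongr : ∀ i ∈ Finset.univ.erase i0,
        (if i = i0 then ({1} : Finset ℕ) else Finset.Icc 1 n).card = n := by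
      intro i hi
      rw [if_neg (Finset.mem_erase.mp hi).1, Nat.card_Icc]
      omega
    rw [Finset.prod_congr rfl hcongr, Finset.prod_const,
      Finset.card_erase_of_mem (Finset.mem_univ i0), Finset.card_univ, Fintype.card_fin]
  set Ψ : (Finset ℕ) × (Fin k → ℕ) → Set (Fin k → ℝ) := fun p =>
    (fun m : ℕ => fun i => if i = i0 then (m : ℝ) else (p.2 i : ℝ)) '' ↑p.1 with hΨ_def
  set S := {T : Set (Fin k → ℝ) | T ⊆ gridPts n k ∧ T.ncard = (k + 1 : ℕ) ∧
    ∃ L : Set (Fin k → ℝ), IsLine L ∧ T ⊆ L} with hS_def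
  have hmemDl : ∀ p ∈ Dl, (p.1 ⊆ Finset.Icc 1 n ∧ p.1.card = k + 1) ∧
      (p.2 i0 = 1 ∧ ∀ i, i ≠ i0 → p.2 i ∈ Finset.Icc 1 n) := by
    intro p hp
    rw [hDl_def, Finset.mem_product, Finset.mem_powersetCard, Fintype.mem_piFinset] at hp
    refine ⟨⟨hp.1.1, hp.1.2⟩, ?_, ?_⟩
    · have := hp.2 i0
      rwa [if_pos rfl, Finset.mem_singleton] at this
    · intro i hi
      have := hp.2 i
      rwa [if_neg hi] at this
  have hinj_pt : ∀ c : Fin k → ℕ, Set.InjOn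
      (fun m : ℕ => fun i => if i = i0 then (m : ℝ) else (c i : ℝ)) (Set.univ) := by
    intro c m _ m' _ h
    have := congrFun h i0
    simp only [if_pos rfl] at this
    exact_mod_cast this
  have hmaps : ∀ p ∈ (↑Dl : Set ((Finset ℕ) × (Fin k → ℕ))), Ψ p ∈ S := by
    intro p hp
    obtain ⟨⟨hsub, hcard⟩, hc0, hci⟩ := hmemDl p (Finset.mem_coe.mp hp)
    refine ⟨?_, ?_, ?_⟩
    · rintro q ⟨m, hm, rfl⟩
      intro i
      by_cases hii : i = i0
      · subst hii
        have := Finset.mem_Icc.mp (hsub hm)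
        exact ⟨m, this.1, this.2, by simp⟩
      · have := Finset.mem_Icc.mp (hci i hii)
        exact ⟨p.2 i, this.1, this.2, by simp [hii]⟩
    · rw [hΨ_def]
      have : Set.InjOn (fun m : ℕ => fun i => if i = i0 then (m : ℝ) else (p.2 i : ℝ)) ↑p.1 :=
        (hinj_pt p.2).mono (Set.subset_univ _)
      rw [Set.ncard_image_of_injOn this, Set.ncard_coe_finset, hcard]
    · refine ⟨{q | ∃ t : ℝ, q = (fun i => if i = i0 then (0 : ℝ) else (p.2 i : ℝ))
        + t • (fun i => if i = i0 then (1 : ℝ) else 0)}, ⟨_, _, ?_, rfl⟩, ?_⟩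
      · intro h
        have := congrFun h i0
        simp only [if_pos rfl, Pi.zero_apply] at this
        norm_num at this
      · rintro q ⟨m, hm, rfl⟩
        refine ⟨(m : ℝ), ?_⟩
        funext i
        by_cases hii : i = i0
        · subst hii
          simp [if_pos rfl]
        · simp [if_neg hii]
  have hinj : Set.InjOn Ψ ↑Dl := by
    intro p hp p' hp' h
    obtain ⟨⟨hsub, hcard⟩, hc0, hci⟩ := hmemDl p (Finset.mem_coe.mp hp)
    obtain ⟨⟨hsub', hcard'⟩, hc0', hci'⟩ := hmemDl p' (Finset.mem_coe.mp hp')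
    have hSeq : ∀ m ∈ p.1, m ∈ p'.1 ∧ ∀ i, i ≠ i0 → (p.2 i : ℝ) = (p'.2 i : ℝ) := by
      intro m hm
      have hq : (fun i => if i = i0 then (m : ℝ) else (p.2 i : ℝ)) ∈ Ψ p' := by
        rw [← h]
        exact ⟨m, Finset.mem_coe.mpr hm, rfl⟩
      obtain ⟨m', hm', heq⟩ := hq
      have h1 : (m' : ℝ) = (m : ℝ) := by
        have := congrFun heq i0
        simpa [if_pos rfl] using this
      have h2 : m' = m := by exact_mod_cast h1
      subst h2
      refine ⟨Finset.mem_coe.mp hm', fun i hi => ?_⟩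
      have := congrFun heq i
      simpa [if_neg hi] using this.symm
    have hSeq' : ∀ m ∈ p'.1, m ∈ p.1 := by
      intro m hm
      have hq : (fun i => if i = i0 then (m : ℝ) else (p'.2 i : ℝ)) ∈ Ψ p := by
        rw [h]
        exact ⟨m, Finset.mem_coe.mpr hm, rfl⟩
      obtain ⟨m', hm', heq⟩ := hq
      have h1 : (m' : ℝ) = (m : ℝ) := by
        have := congrFun heq i0
        simpa [if_pos rfl] using this
      have h2 : m' = m := by exact_mod_cast h1
      subst h2
      exact Finset.mem_coe.mp hm'
    have hne : p.1.Nonempty := by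
      rw [← Finset.card_pos, hcard]
      omega
    obtain ⟨m0, hm0⟩ := hne
    have hceq : p.2 = p'.2 := by
      funext i
      by_cases hii : i = i0
      · subst hii
        rw [hc0, hc0']
      · have := (hSeq m0 hm0).2 i hii
        exact_mod_cast this
    have hfeq : p.1 = p'.1 := by
      ext m
      exact ⟨fun hm => (hSeq m hm).1, fun hm => hSeq' m hm⟩
    exact Prod.ext hfeq hceq
  have hcount := Set.ncard_le_ncard_of_injOn Ψ hmaps hinj (eHset_finite n k (k + 1))
  rw [Set.ncard_coe_finset, hDlcard] at hcount
  exact hcount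

lemma final_lower {n k : ℕ} (hk : 2 ≤ k) (hlog : 300 ≤ Real.logb 2 n)
    (hr : ((k : ℝ) + 1) ≤ 0.01 * Real.logb 2 n) (hn : 2 ≤ n) :
    (n : ℝ) ^ (2 * k) / ((k : ℝ) + 1) ^ (2 * k) ≤ (n.choose (k + 1) : ℝ) * (n : ℝ) ^ (k - 1) := by
  set R : ℝ := (k : ℝ) + 1 with hR_def
  have hR3 : (3 : ℝ) ≤ R := by
    have : (2 : ℝ) ≤ (k : ℝ) := by exact_mod_cast hk
    rw [hR_def]; linarith
  have hnpos : (0 : ℝ) < n := by positivity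
  have hl2lb : (0.6931471803 : ℝ) < Real.log 2 := Real.log_two_gt_d9
  have hlog2pos : (0 : ℝ) < Real.log 2 := by linarith
  have hsq : Real.log n ≤ 2 * Real.sqrt n := by
    have h1 : Real.log n = 2 * Real.log (Real.sqrt n) := by
      rw [Real.log_sqrt (by positivity)]; ring
    have h2 : Real.log (Real.sqrt n) ≤ Real.sqrt n - 1 :=
      Real.log_le_sub_one_of_pos (Real.sqrt_pos.mpr hnpos)
    nlinarith [Real.sqrt_nonneg (n : ℝ)]
  have hLb_le : Real.logb 2 n ≤ 3 * Real.sqrt n := by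
    rw [Real.logb, div_le_iff₀ hlog2pos]
    nlinarith [Real.sqrt_nonneg (n : ℝ)]
  have hRsqrt : R ≤ 0.03 * Real.sqrt n := le_trans hr (by nlinarith)
  have hR2 : R ^ 2 ≤ 0.001 * n := by
    nlinarith [Real.sq_sqrt (show (0 : ℝ) ≤ n by positivity), Real.sqrt_nonneg (n : ℝ)]
  have hRltn : R < n := by nlinarith
  have hnmRpos : (0 : ℝ) < (n : ℝ) - R := by linarith
  have hx : (-2 : ℝ) ≤ -(R / n) := by
    have : R / n ≤ 1 := by rw [div_le_one hnpos]; linarith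
    have h0 : 0 ≤ R / n := by positivity
    linarith
  have hbern0 := one_add_mul_le_pow hx (k + 1)
  have hcast : ((k + 1 : ℕ) : ℝ) = R := by rw [hR_def]; push_cast; ring
  have he1 : (1 : ℝ) + ((k + 1 : ℕ) : ℝ) * (-(R / n)) = 1 - R ^ 2 / n := by
    rw [hcast]; field_simp; ring
  have hbern : (n : ℝ) ^ (k + 1) * (1 - R ^ 2 / n) ≤ ((n : ℝ) - R) ^ (k + 1) := by
    have he2 : ((n : ℝ) - R) ^ (k + 1) = (n : ℝ) ^ (k + 1) * (1 + -(R / n)) ^ (k + 1) := by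
      rw [← mul_pow]
      congr 1
      field_simp
      ring
    rw [he2]
    calc (n : ℝ) ^ (k + 1) * (1 - R ^ 2 / n)
        = (n : ℝ) ^ (k + 1) * (1 + ((k + 1 : ℕ) : ℝ) * (-(R / n))) := by rw [he1]
      _ ≤ (n : ℝ) ^ (k + 1) * (1 + -(R / n)) ^ (k + 1) :=
          mul_le_mul_of_nonneg_left hbern0 (by positivity)
  have h23 : (2 / 3 : ℝ) ≤ 1 - R ^ 2 / n := by
    have : R ^ 2 / n ≤ 0.001 := by rw [div_le_iff₀ hnpos]; nlinarith
    linarith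
  have hRpow : (3 : ℝ) ≤ R ^ (k - 1) :=
    le_trans hR3 (le_self_pow₀ (by linarith) (by omega))
  have hkey : (n : ℝ) ^ (k + 1) ≤ ((n : ℝ) - R) ^ (k + 1) * R ^ (k - 1) := by
    have h1 : (n : ℝ) ^ (k + 1) * (2 / 3) ≤ ((n : ℝ) - R) ^ (k + 1) := by
      calc (n : ℝ) ^ (k + 1) * (2 / 3) ≤ (n : ℝ) ^ (k + 1) * (1 - R ^ 2 / n) :=
            mul_le_mul_of_nonneg_left h23 (by positivity)
        _ ≤ ((n : ℝ) - R) ^ (k + 1) := hbern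
    have h2 : ((n : ℝ) - R) ^ (k + 1) * 3 ≤ ((n : ℝ) - R) ^ (k + 1) * R ^ (k - 1) :=
      mul_le_mul_of_nonneg_left hRpow (pow_nonneg hnmRpos.le (k + 1))
    have h3 : (0 : ℝ) ≤ (n : ℝ) ^ (k + 1) := by positivity
    linarith
  have hsplitn : (n : ℝ) ^ (2 * k) = (n : ℝ) ^ (k + 1) * (n : ℝ) ^ (k - 1) := by
    rw [← pow_add]; congr 1; omega
  have hsplitR : R ^ (2 * k) = R ^ (k + 1) * R ^ (k - 1) := by
    rw [← pow_add]; congr 1; omega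
  have hRpos : (0 : ℝ) < R := by linarith
  have hmain : (n : ℝ) ^ (2 * k) / R ^ (2 * k)
      ≤ ((n : ℝ) - R) ^ (k + 1) / R ^ (k + 1) * (n : ℝ) ^ (k - 1) := by
    rw [hsplitn, hsplitR]
    have hd : (n : ℝ) ^ (k + 1) / (R ^ (k + 1) * R ^ (k - 1))
        ≤ ((n : ℝ) - R) ^ (k + 1) / R ^ (k + 1) := by
      rw [div_le_div_iff₀ (mul_pos (pow_pos hRpos _) (pow_pos hRpos _)) (pow_pos hRpos _)]
      calc (n : ℝ) ^ (k + 1) * R ^ (k + 1)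
          ≤ (((n : ℝ) - R) ^ (k + 1) * R ^ (k - 1)) * R ^ (k + 1) :=
            mul_le_mul_of_nonneg_right hkey (pow_nonneg hRpos.le _)
        _ = ((n : ℝ) - R) ^ (k + 1) * (R ^ (k + 1) * R ^ (k - 1)) := by ring
    calc (n : ℝ) ^ (k + 1) * (n : ℝ) ^ (k - 1) / (R ^ (k + 1) * R ^ (k - 1))
        = ((n : ℝ) ^ (k + 1) / (R ^ (k + 1) * R ^ (k - 1))) * (n : ℝ) ^ (k - 1) := by ring
      _ ≤ (((n : ℝ) - R) ^ (k + 1) / R ^ (k + 1)) * (n : ℝ) ^ (k - 1) :=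
          mul_le_mul_of_nonneg_right hd (by positivity)
  have hchoose : ((n : ℝ) - R) ^ (k + 1) / R ^ (k + 1) ≤ (n.choose (k + 1) : ℝ) := by
    have hkn : k + 1 ≤ n := by
      have h := hRltn
      rw [hR_def] at h
      have : ((k + 1 : ℕ) : ℝ) < (n : ℝ) := by push_cast; linarith
      exact_mod_cast this.le
    have h1 : ((n : ℝ) - R) ^ (k + 1) ≤ (((n + 1 - (k + 1) : ℕ)) : ℝ) ^ (k + 1) := by
      apply pow_le_pow_left₀ hnmRpos.le
      have he : ((n + 1 - (k + 1) : ℕ) : ℝ) = (n : ℝ) + 1 - ((k + 1 : ℕ) : ℝ) := by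
        have h0 : n + 1 - (k + 1) = n - k := by omega
        rw [h0, Nat.cast_sub (by omega : k ≤ n)]
        push_cast
        ring
      rw [he, hcast]
      linarith
    have h2 : (Nat.factorial (k + 1) : ℝ) ≤ R ^ (k + 1) := by
      calc (Nat.factorial (k + 1) : ℝ) ≤ (((k + 1) ^ (k + 1) : ℕ) : ℝ) := by
            exact_mod_cast Nat.factorial_le_pow (k + 1)
        _ = R ^ (k + 1) := by rw [← hcast]; push_cast; ring
    have hfacpos : (0 : ℝ) < (Nat.factorial (k + 1) : ℝ) := by
      exact_mod_cast Nat.factorial_pos _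
    calc ((n : ℝ) - R) ^ (k + 1) / R ^ (k + 1)
        ≤ (((n + 1 - (k + 1) : ℕ)) : ℝ) ^ (k + 1) / (Nat.factorial (k + 1) : ℝ) :=
          div_le_div₀ (by positivity) h1 hfacpos h2
      _ ≤ (n.choose (k + 1) : ℝ) := Nat.pow_le_choose _ _
  calc (n : ℝ) ^ (2 * k) / R ^ (2 * k)
      ≤ ((n : ℝ) - R) ^ (k + 1) / R ^ (k + 1) * (n : ℝ) ^ (k - 1) := hmain
    _ ≤ (n.choose (k + 1) : ℝ) * (n : ℝ) ^ (k - 1) :=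
        mul_le_mul_of_nonneg_right hchoose (by positivity)


/-- Claim 4.1(ii) of the paper: if r = k+1, 3 ≤ r and r, k ≤ 0.01·log₂ n then
n^(2k)/r^(2k) ≤ e(H(n,k,r)) ≤ (k·2^(r+k)/r!)·n^(2k)·log₂ n. -/
theorem collinear_count_r_eq_k_succ :
    ∃ n₀ : ℕ, ∀ n : ℕ, n₀ ≤ n → ∀ r k : ℕ, r = k + 1 → 3 ≤ r →
      (r : ℝ) ≤ 0.01 * Real.logb 2 (n : ℝ) → (k : ℝ) ≤ 0.01 * Real.logb 2 (n : ℝ) →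
      (n : ℝ) ^ (2 * k) / (r : ℝ) ^ (2 * k) ≤ (eH n k r : ℝ) ∧
      (eH n k r : ℝ) ≤ (k : ℝ) * 2 ^ (r + k) / (Nat.factorial r : ℝ) * (n : ℝ) ^ (2 * k) *
        Real.logb 2 (n : ℝ) := by
  refine ⟨2, fun n hn r k hrk hr3 hrlog hklog => ?_⟩
  subst hrk
  have hk : 2 ≤ k := by omega
  have hcastr : ((k + 1 : ℕ) : ℝ) = (k : ℝ) + 1 := by push_cast; ring
  have hlog : 300 ≤ Real.logb 2 n := by
    have h1 : (3 : ℝ) ≤ ((k + 1 : ℕ) : ℝ) := by exact_mod_cast hr3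
    linarith [le_trans h1 hrlog]
  constructor
  · -- lower bound
    have h1 := lower_card hk (by omega : 1 ≤ n) (n := n)
    have h2 := final_lower hk hlog (by rw [← hcastr]; exact hrlog) hn
    have h3 : ((n.choose (k + 1) * n ^ (k - 1) : ℕ) : ℝ) ≤ (eH n k (k + 1) : ℝ) := by
      exact_mod_cast h1
    calc (n : ℝ) ^ (2 * k) / (((k + 1 : ℕ)) : ℝ) ^ (2 * k)
        = (n : ℝ) ^ (2 * k) / ((k : ℝ) + 1) ^ (2 * k) := by rw [hcastr]
      _ ≤ (n.choose (k + 1) : ℝ) * (n : ℝ) ^ (k - 1) := h2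
      _ = ((n.choose (k + 1) * n ^ (k - 1) : ℕ) : ℝ) := by push_cast; ring
      _ ≤ (eH n k (k + 1) : ℝ) := h3
  · -- upper bound
    have h1 := eH_le_card (n := n) hk
    have h2 := card_Fbig_le (n := n) (by omega : 1 ≤ k)
    have h3 := sum_real_bound hk hn
    have h4 := final_upper hk hlog
    have c1 : (eH n k (k + 1) : ℝ) ≤ ((Fbig n k).card : ℝ) := by exact_mod_cast h1
    have c2 : ((Fbig n k).card : ℝ) ≤ ((∑ s ∈ Finset.Icc k (n - 1),
        n ^ k * ((2 * ((n - 1) / s) + 1) ^ k * (s - 1).choose (k - 1)) : ℕ) : ℝ) := by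
      exact_mod_cast h2
    exact le_trans (le_trans c1 c2) (le_trans h3 h4)
end

section
/- For all integers n ≥ 2, k ≥ 2 and t ≥ 1, the number of lines in ℝ^k that contain more than 2^t and at most 2^{t+1} points of the grid [n]^k = {1,…,n}^k satisfies L(t) ≤ 2^k · (n/2^t)^k · k · n^k/2^t. -/
namespace DyadicAux

lemma line_shift {k : ℕ} (X W : Fin k → ℝ) (j : ℝ) :
    {p : Fin k → ℝ | ∃ s : ℝ, p = (X + j • W) + s • W} = {p | ∃ s : ℝ, p = X + s • W} := by
  ext p
  simp only [Set.mem_setOf_eq]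
  constructor
  · rintro ⟨s, rfl⟩; exact ⟨j + s, by module⟩
  · rintro ⟨s, rfl⟩; exact ⟨s - j, by module⟩

lemma mem_grid_int {n k : ℕ} {p : Fin k → ℝ} :
    p ∈ gridPts n k ↔ ∀ i, ∃ z : ℤ, p i = (z : ℝ) ∧ 1 ≤ z ∧ z ≤ (n : ℤ) := by
  constructor
  · intro h i
    obtain ⟨m, h1, h2, h3⟩ := h i
    exact ⟨(m : ℤ), by exact_mod_cast h3, by exact_mod_cast h1, by exact_mod_cast h2⟩
  · intro h i
    obtain ⟨z, h1, h2, h3⟩ := h i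
    refine ⟨z.toNat, by omega, by omega, ?_⟩
    rw [h1]
    exact_mod_cast (Int.toNat_of_nonneg (by omega)).symm

lemma grid_finite (n k : ℕ) : (gridPts n k).Finite := by
  apply Set.Finite.subset (Set.Finite.pi (fun i : Fin k => Set.Finite.image (fun m : ℕ => (m : ℝ)) (Set.finite_Icc 1 n)))
  intro p hp
  rw [Set.mem_pi]
  intro i _
  obtain ⟨m, h1, h2, h3⟩ := hp i
  exact ⟨m, Set.mem_Icc.mpr ⟨h1, h2⟩, h3.symm⟩

lemma ap_structure (n k : ℕ) (u v : Fin k → ℝ) (hv : v ≠ 0)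
    (h2 : 2 ≤ ({p : Fin k → ℝ | ∃ s : ℝ, p = u + s • v} ∩ gridPts n k).ncard) :
    ∃ x w : Fin k → ℤ, w ≠ 0 ∧
      {p : Fin k → ℝ | ∃ s : ℝ, p = u + s • v}
        = {p | ∃ s : ℝ, p = (fun i => (x i : ℝ)) + s • (fun i => (w i : ℝ))} ∧
      ∀ j : ℕ, j < ({p : Fin k → ℝ | ∃ s : ℝ, p = u + s • v} ∩ gridPts n k).ncard →
        ∀ i, 1 ≤ x i + (j : ℤ) * w i ∧ x i + (j : ℤ) * w i ≤ (n : ℤ) := by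
  classical
  set L : Set (Fin k → ℝ) := {p | ∃ s : ℝ, p = u + s • v} with hLdef
  set T : Set ℝ := {s : ℝ | u + s • v ∈ gridPts n k} with hTdef
  have hinj : Function.Injective (fun s : ℝ => u + s • v) := by
    intro s s' h
    have h1 : s • v = s' • v := by simpa using h
    have h2 : (s - s') • v = 0 := by rw [sub_smul, h1, sub_self]
    rcases smul_eq_zero.mp h2 with h3 | h3
    · linarith [sub_eq_zero.mp h3]
    · exact absurd h3 hv
  have himg : (fun s : ℝ => u + s • v) '' T = L ∩ gridPts n k := by
    ext p
    constructor
    · rintro ⟨s, hs, rfl⟩; exact ⟨⟨s, rfl⟩, hs⟩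
    · rintro ⟨⟨s, rfl⟩, hp⟩; exact ⟨s, hp, rfl⟩
  have hTfin : T.Finite := by
    have he : T = (fun s : ℝ => u + s • v) ⁻¹' (gridPts n k) := rfl
    rw [he]
    exact Set.Finite.preimage hinj.injOn (grid_finite n k)
  have hTcard : T.ncard = (L ∩ gridPts n k).ncard := by
    rw [← himg, Set.ncard_image_of_injective _ hinj]
  set Tf : Finset ℝ := hTfin.toFinset with hTfdef
  have hTfcard : Tf.card = (L ∩ gridPts n k).ncard := by
    rw [← hTcard, Set.ncard_eq_toFinset_card _ hTfin]
  have hTf2 : 2 ≤ Tf.card := by omega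
  have hne : Tf.Nonempty := Finset.card_pos.mp (by omega)
  set a : ℝ := Tf.min' hne with hadef
  set amax : ℝ := Tf.max' hne with hamaxdef
  have haT : a ∈ T := hTfin.mem_toFinset.mp (Tf.min'_mem hne)
  have hamaxT : amax ∈ T := hTfin.mem_toFinset.mp (Tf.max'_mem hne)
  have hne2 : (Tf.erase a).Nonempty := by
    rw [← Finset.card_pos, Finset.card_erase_of_mem (Tf.min'_mem hne)]; omega
  set a' : ℝ := (Tf.erase a).min' hne2 with ha'def
  have ha'mem : a' ∈ Tf.erase a := (Tf.erase a).min'_mem hne2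
  have ha'Tf : a' ∈ Tf := Finset.mem_of_mem_erase ha'mem
  have ha'T : a' ∈ T := hTfin.mem_toFinset.mp ha'Tf
  have ha'ne : a' ≠ a := (Finset.mem_erase.mp ha'mem).1
  have hlt : a < a' := lt_of_le_of_ne (Tf.min'_le a' ha'Tf) (Ne.symm ha'ne)
  set g : ℝ := a' - a with hgdef
  have hg : 0 < g := sub_pos.mpr hlt
  -- coordinates of grid points
  have hcoord : ∀ s ∈ T, ∀ i, ∃ z : ℤ, u i + s * v i = (z : ℝ) ∧ 1 ≤ z ∧ z ≤ (n : ℤ) := by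
    intro s hs i
    obtain ⟨z, hz, h1', h2'⟩ := (mem_grid_int.mp hs) i
    refine ⟨z, ?_, h1', h2'⟩
    simpa [Pi.add_apply, Pi.smul_apply, smul_eq_mul] using hz
  choose xa hxa hxa1 hxa2 using hcoord a haT
  choose xa' hxa' hxa'1 hxa'2 using hcoord a' ha'T
  set w : Fin k → ℤ := fun i => xa' i - xa i with hwdef
  have hgv : ∀ i, g * v i = ((w i : ℤ) : ℝ) := by
    intro i
    have : ((w i : ℤ) : ℝ) = (xa' i : ℝ) - (xa i : ℝ) := by rw [hwdef]; push_cast; ring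
    rw [this, ← hxa' i, ← hxa i, hgdef]; ring
  -- membership criterion
  have hmem : ∀ s : ℝ, a ≤ s → s ≤ amax → (∀ i, ∃ z : ℤ, u i + s * v i = (z : ℝ)) → s ∈ T := by
    intro s hs1 hs2 hz
    rw [hTdef, Set.mem_setOf_eq, mem_grid_int]
    intro i
    obtain ⟨z, hzi⟩ := hz i
    obtain ⟨zb, hzb, hzb1, hzb2⟩ := hcoord amax hamaxT i
    have hza := hxa i; have hza1 := hxa1 i; have hza2 := hxa2 i
    have hza1' : (1 : ℝ) ≤ (xa i : ℝ) := by exact_mod_cast hza1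
    have hza2' : ((xa i : ℤ) : ℝ) ≤ (n : ℝ) := by exact_mod_cast hza2
    have hzb1' : (1 : ℝ) ≤ (zb : ℝ) := by exact_mod_cast hzb1
    have hzb2' : ((zb : ℤ) : ℝ) ≤ (n : ℝ) := by exact_mod_cast hzb2
    refine ⟨z, by simpa [Pi.add_apply, Pi.smul_apply, smul_eq_mul] using hzi, ?_, ?_⟩
    · have : (1 : ℝ) ≤ (z : ℝ) := by
        rcases le_or_gt 0 (v i) with hvi | hvi
        · nlinarith [mul_le_mul_of_nonneg_right hs1 hvi]
        · nlinarith [mul_le_mul_of_nonpos_right hs2 hvi.le]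
      exact_mod_cast this
    · have : (z : ℝ) ≤ (n : ℝ) := by
        rcases le_or_gt 0 (v i) with hvi | hvi
        · nlinarith [mul_le_mul_of_nonneg_right hs2 hvi]
        · nlinarith [mul_le_mul_of_nonpos_right hs1 hvi.le]
      exact_mod_cast this
  -- Claim B : every element of T is of the form a + j * g
  have hB : ∀ s ∈ Tf, ∃ j : ℕ, s = a + (j : ℝ) * g := by
    intro s hsF
    have hsT : s ∈ T := hTfin.mem_toFinset.mp hsF
    have has : a ≤ s := Tf.min'_le s hsF
    have hsmax : s ≤ amax := Tf.le_max' s hsF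
    set q : ℤ := ⌊(s - a) / g⌋ with hqdef
    have hq0 : 0 ≤ q := Int.floor_nonneg.mpr (div_nonneg (by linarith) hg.le)
    have hql : (q : ℝ) * g ≤ s - a := by
      have h := Int.floor_le ((s - a) / g)
      have := mul_le_mul_of_nonneg_right h hg.le
      rwa [div_mul_cancel₀ _ hg.ne'] at this
    have hqu : s - a < ((q : ℝ) + 1) * g := by
      have h := Int.lt_floor_add_one ((s - a) / g)
      have := mul_lt_mul_of_pos_right h hg
      rwa [div_mul_cancel₀ _ hg.ne'] at this
    set s' : ℝ := s - (q : ℝ) * g with hs'def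
    have hq0' : (0 : ℝ) ≤ (q : ℝ) := by exact_mod_cast hq0
    have hs'T : s' ∈ T := by
      apply hmem
      · rw [hs'def]; linarith
      · rw [hs'def]; nlinarith
      · intro i
        obtain ⟨zs, hzs, _, _⟩ := hcoord s hsT i
        refine ⟨zs - q * w i, ?_⟩
        push_cast
        have h1 := hgv i
        rw [hs'def]
        linear_combination hzs - (q : ℝ) * h1
    by_cases hcase : s' = a
    · refine ⟨q.toNat, ?_⟩
      have hqt : ((q.toNat : ℕ) : ℝ) = (q : ℝ) := by exact_mod_cast Int.toNat_of_nonneg hq0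
      rw [hqt]
      rw [hs'def] at hcase
      linarith
    · exfalso
      have hs'F : s' ∈ Tf.erase a :=
        Finset.mem_erase.mpr ⟨hcase, hTfin.mem_toFinset.mpr hs'T⟩
      have hle := (Tf.erase a).min'_le s' hs'F
      rw [← ha'def] at hle
      have : a' = a + g := by rw [hgdef]; ring
      rw [hs'def] at hle
      nlinarith
  -- Claim C
  have hC : ∀ j : ℕ, a + (j : ℝ) * g ≤ amax → (a + (j : ℝ) * g) ∈ T := by
    intro j hj
    apply hmem
    · nlinarith [Nat.cast_nonneg (α := ℝ) j, hg.le]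
    · exact hj
    · intro i
      refine ⟨xa i + (j : ℤ) * w i, ?_⟩
      push_cast
      linear_combination hxa i + (j : ℝ) * hgv i
  obtain ⟨Q, hQ⟩ := hB amax (Tf.max'_mem hne)
  have hcardQ : Tf.card ≤ Q + 1 := by
    have hsub : Tf ⊆ (Finset.range (Q + 1)).image (fun j : ℕ => a + (j : ℝ) * g) := by
      intro s hs
      obtain ⟨j, hj⟩ := hB s hs
      have hjQ : j ≤ Q := by
        by_contra hcon
        push_neg at hcon
        have hjr : (Q : ℝ) < (j : ℝ) := by exact_mod_cast hcon
        have : amax < s := by rw [hQ, hj]; nlinarith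
        exact absurd (Tf.le_max' s hs) (not_le.mpr this)
      exact Finset.mem_image.mpr ⟨j, Finset.mem_range.mpr (by omega), hj.symm⟩
    calc Tf.card ≤ _ := Finset.card_le_card hsub
      _ ≤ Q + 1 := le_trans Finset.card_image_le (by simp)
  -- final assembly
  refine ⟨xa, w, ?_, ?_, ?_⟩
  · -- w ≠ 0
    obtain ⟨i, hi⟩ := Function.ne_iff.mp hv
    have : ((w i : ℤ) : ℝ) ≠ 0 := by
      rw [← hgv i]
      exact mul_ne_zero hg.ne' (by simpa using hi)
    intro h0
    apply this
    rw [h0]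
    simp
  · -- line equality
    have hX : (fun i => (xa i : ℝ)) = u + a • v := by
      funext i
      simp only [Pi.add_apply, Pi.smul_apply, smul_eq_mul]
      exact (hxa i).symm
    have hW : (fun i => (w i : ℝ)) = g • v := by
      funext i
      simp only [Pi.smul_apply, smul_eq_mul]
      exact (hgv i).symm
    rw [hX, hW]
    ext p
    simp only [Set.mem_setOf_eq]
    constructor
    · rintro ⟨s, rfl⟩
      refine ⟨(s - a) / g, ?_⟩
      rw [smul_smul, div_mul_cancel₀ _ hg.ne']
      module
    · rintro ⟨s, rfl⟩
      refine ⟨a + s * g, ?_⟩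
      rw [smul_smul]
      module
  · -- grid bounds
    intro j hj i
    have hjQ : j ≤ Q := by omega
    have hjr : (j : ℝ) ≤ (Q : ℝ) := by exact_mod_cast hjQ
    have hle : a + (j : ℝ) * g ≤ amax := by rw [hQ]; nlinarith
    have hsT := hC j hle
    obtain ⟨z, hz, hz1, hz2⟩ := hcoord _ hsT i
    have hzz : (xa i + (j : ℤ) * w i) = z := by
      have hr : ((xa i + (j : ℤ) * w i : ℤ) : ℝ) = (z : ℝ) := by
        push_cast
        linear_combination hz - hxa i - (j : ℝ) * hgv i
      exact_mod_cast hr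
    rw [hzz]
    exact ⟨hz1, hz2⟩

lemma sum_Icc_abs (Q : ℕ) (C D : ℤ) :
    ∑ b ∈ Finset.Icc (-(Q : ℤ)) (Q : ℤ), (C - D * |b|)
      = (2 * (Q : ℤ) + 1) * C - D * ((Q : ℤ) * ((Q : ℤ) + 1)) := by
  induction Q with
  | zero => simp
  | succ q ih =>
    have hset : Finset.Icc (-((q : ℤ) + 1)) ((q : ℤ) + 1)
        = insert (-((q : ℤ) + 1)) (insert ((q : ℤ) + 1) (Finset.Icc (-(q : ℤ)) (q : ℤ))) := by
      ext b
      simp only [Finset.mem_Icc, Finset.mem_insert]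
      omega
    push_cast
    rw [hset, Finset.sum_insert (by simp only [Finset.mem_insert, Finset.mem_Icc]; omega),
      Finset.sum_insert (by simp only [Finset.mem_Icc]; omega), ih]
    have h1 : |-((q : ℤ) + 1)| = (q : ℤ) + 1 := by rw [abs_neg]; exact abs_of_nonneg (by omega)
    have h2 : |((q : ℤ) + 1)| = (q : ℤ) + 1 := abs_of_nonneg (by omega)
    rw [h1, h2]
    ring

lemma Acard_key (n m : ℕ) (M : ℤ) (A : Finset (ℤ × ℤ))
    (hA : A = (Finset.Icc (-M) M).biUnion
      (fun b => (Finset.Icc (max 1 (1 - (m : ℤ) * b)) (min (n : ℤ) ((n : ℤ) - (m : ℤ) * b))).image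
        (fun a => (a, b))))
    (hm1 : 1 ≤ m) (hM1 : 1 ≤ M)
    (hMM : 2 * (m : ℤ) * M ≤ (n : ℤ) - 1) :
    (m : ℤ) * (A.card : ℤ) ≤ (n : ℤ) ^ 2 := by
  have hmz : (1 : ℤ) ≤ (m : ℤ) := by exact_mod_cast hm1
  have step1 : (A.card : ℤ) ≤ ∑ b ∈ Finset.Icc (-M) M, ((n : ℤ) - (m : ℤ) * |b|) := by
    have h1 : A.card ≤ ∑ b ∈ Finset.Icc (-M) M,
        ((Finset.Icc (max 1 (1 - (m : ℤ) * b)) (min (n : ℤ) ((n : ℤ) - (m : ℤ) * b))).image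
          (fun a => (a, b))).card := by
      rw [hA]
      exact Finset.card_biUnion_le
    have h2 : ((∑ b ∈ Finset.Icc (-M) M,
        ((Finset.Icc (max 1 (1 - (m : ℤ) * b)) (min (n : ℤ) ((n : ℤ) - (m : ℤ) * b))).image
          (fun a => (a, b))).card : ℕ) : ℤ)
        ≤ ∑ b ∈ Finset.Icc (-M) M, ((n : ℤ) - (m : ℤ) * |b|) := by
      push_cast
      apply Finset.sum_le_sum
      intro b hb
      rw [Finset.mem_Icc] at hb
      have habsb : |b| ≤ M := abs_le.mpr ⟨hb.1, hb.2⟩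
      have hnb : 0 ≤ (n : ℤ) - (m : ℤ) * |b| := by
        have : (m : ℤ) * |b| ≤ (m : ℤ) * M :=
          mul_le_mul_of_nonneg_left habsb (by positivity)
        nlinarith
      have hc1 : (((Finset.Icc (max 1 (1 - (m : ℤ) * b))
          (min (n : ℤ) ((n : ℤ) - (m : ℤ) * b))).image (fun a => (a, b))).card : ℤ)
          ≤ ((Finset.Icc (max 1 (1 - (m : ℤ) * b))
            (min (n : ℤ) ((n : ℤ) - (m : ℤ) * b))).card : ℤ) := by
        exact_mod_cast Finset.card_image_le
      refine le_trans hc1 ?_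
      rw [Int.card_Icc, Int.toNat_eq_max]
      apply max_le _ hnb
      rcases le_or_gt 0 b with hb0 | hb0
      · rw [abs_of_nonneg hb0]
        have hmb : 0 ≤ (m : ℤ) * b := by positivity
        rw [min_eq_right (by linarith), max_eq_left (by linarith)]
        linarith
      · rw [abs_of_neg hb0]
        have hmb : (m : ℤ) * b ≤ 0 := mul_nonpos_of_nonneg_of_nonpos (by positivity) hb0.le
        rw [min_eq_left (by linarith), max_eq_right (by linarith)]
        nlinarith
    exact le_trans (by exact_mod_cast h1) h2
  have hMnat : (M.toNat : ℤ) = M := Int.toNat_of_nonneg (by linarith)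
  have hsum := sum_Icc_abs M.toNat (n : ℤ) (m : ℤ)
  rw [hMnat] at hsum
  rw [hsum] at step1
  have hy1 : 0 ≤ (n : ℤ) - (m : ℤ) * M := by nlinarith
  have hy2 : 0 ≤ (n : ℤ) - (m : ℤ) * M - (m : ℤ) := by nlinarith
  have h3 := mul_le_mul_of_nonneg_left step1 (show (0 : ℤ) ≤ (m : ℤ) by positivity)
  nlinarith [mul_nonneg hy1 hy2]

/-- The line (or point) determined by a combinatorial pair datum. -/
def lineOf {k : ℕ} (f : Fin k → ℤ × ℤ) : Set (Fin k → ℝ) :=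
  {p | ∃ s : ℝ, p = (fun i => ((f i).1 : ℝ)) + s • (fun i => ((f i).2 : ℝ))}

end DyadicAux

open DyadicAux in
/-- The key counting step in the proof of Claim 4.1 of the paper: the number L(t) of lines
in ℝᵏ containing more than 2^t and at most 2^(t+1) points of [n]^k satisfies
L(t) ≤ 2^k·(n/2^t)^k·k·n^k/2^t. -/
theorem dyadic_rich_lines_count (n k t : ℕ) (hn : 2 ≤ n) (hk : 2 ≤ k) (ht : 1 ≤ t) :
    ({L : Set (Fin k → ℝ) | IsLine L ∧ 2 ^ t < (L ∩ gridPts n k).ncard ∧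
        (L ∩ gridPts n k).ncard ≤ 2 ^ (t + 1)}.ncard : ℝ) ≤
      2 ^ k * ((n : ℝ) / 2 ^ t) ^ k * (k : ℝ) * (n : ℝ) ^ k / 2 ^ t := by
  classical
  set S : Set (Set (Fin k → ℝ)) := {L | IsLine L ∧ 2 ^ t < (L ∩ gridPts n k).ncard ∧
      (L ∩ gridPts n k).ncard ≤ 2 ^ (t + 1)} with hSdef
  by_cases hS : S = ∅
  · rw [hS]
    simp only [Set.ncard_empty, Nat.cast_zero]
    positivity
  obtain ⟨L₀, hL₀⟩ := Set.nonempty_iff_ne_empty.mpr hS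
  set m : ℕ := 2 ^ (t - 1) with hm
  have hm1 : 1 ≤ m := Nat.one_le_two_pow
  have h2t : 2 ^ t = 2 * m := by
    rw [hm, ← pow_succ']
    congr 1
    omega
  -- key extraction for every line in S
  have key : ∀ L ∈ S, ∃ x w : Fin k → ℤ, w ≠ 0 ∧
      (∀ i, 2 * (m : ℤ) * |w i| ≤ (n : ℤ) - 1) ∧
      (∀ j : ℕ, j ≤ 2 * m → ∀ i, 1 ≤ x i + (j : ℤ) * w i ∧ x i + (j : ℤ) * w i ≤ (n : ℤ)) ∧
      L = {p | ∃ s : ℝ, p = (fun i => (x i : ℝ)) + s • (fun i => (w i : ℝ))} := by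
    intro L hL
    obtain ⟨⟨u, v, hv, rfl⟩, hc1, hc2⟩ := hL
    have hcge : 2 * m < ({p : Fin k → ℝ | ∃ s : ℝ, p = u + s • v} ∩ gridPts n k).ncard := by
      rw [← h2t]; exact hc1
    obtain ⟨x, w, hw, hline, hgrid⟩ := ap_structure n k u v hv (by omega)
    refine ⟨x, w, hw, ?_, ?_, hline⟩
    · intro i
      obtain ⟨ha1, ha2⟩ := hgrid 0 (by omega) i
      obtain ⟨hb1, hb2⟩ := hgrid (2 * m) (by omega) i
      simp only [Nat.cast_zero, zero_mul, add_zero] at ha1 ha2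
      have hcast : ((2 * m : ℕ) : ℤ) = 2 * (m : ℤ) := by push_cast; ring
      rw [hcast] at hb1 hb2
      have habs : |2 * (m : ℤ) * w i| ≤ (n : ℤ) - 1 := abs_le.mpr ⟨by omega, by omega⟩
      calc 2 * (m : ℤ) * |w i| = |2 * (m : ℤ) * w i| := by
            rw [abs_mul, abs_of_nonneg (by positivity : (0 : ℤ) ≤ 2 * (m : ℤ))]
        _ ≤ (n : ℤ) - 1 := habs
    · intro j hj i
      exact hgrid j (by omega) i
  -- basic bound 2m ≤ n - 1
  have h2mn : 2 * (m : ℤ) ≤ (n : ℤ) - 1 := by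
    obtain ⟨x, w, hw, habs, -, -⟩ := key L₀ hL₀
    obtain ⟨i, hi⟩ := Function.ne_iff.mp hw
    have h1 : 1 ≤ |w i| := Int.one_le_abs hi
    nlinarith [habs i, abs_nonneg (w i)]
  set M : ℤ := ((n : ℤ) - 1) / (2 * m) with hMdef
  have hm0 : (0 : ℤ) < 2 * m := by positivity
  have hM1 : 1 ≤ M := by
    rw [hMdef, Int.le_ediv_iff_mul_le hm0]
    linarith
  have hMM : 2 * (m : ℤ) * M ≤ (n : ℤ) - 1 := by
    have h := Int.ediv_mul_le ((n : ℤ) - 1) (show 2 * (m : ℤ) ≠ 0 from hm0.ne')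
    calc 2 * (m : ℤ) * M = ((n : ℤ) - 1) / (2 * m) * (2 * m) := by rw [hMdef]; ring
      _ ≤ (n : ℤ) - 1 := h
  set A : Finset (ℤ × ℤ) := (Finset.Icc (-M) M).biUnion
      (fun b => (Finset.Icc (max 1 (1 - (m : ℤ) * b)) (min (n : ℤ) ((n : ℤ) - (m : ℤ) * b))).image
        (fun a => (a, b))) with hAdef
  set T : Finset (Fin k → ℤ × ℤ) := Fintype.piFinset (fun _ => A) with hTdef
  have hTcard : T.card = A.card ^ k := by
    simp [hTdef, Fintype.card_piFinset]
  -- per-line count of pairs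
  have perline : ∀ L ∈ S, m ≤ (T.filter (fun f => lineOf f = L)).card := by
    intro L hL
    obtain ⟨x, w, hw, habs, hgrid, hline⟩ := key L hL
    obtain ⟨i₀, hi₀⟩ := Function.ne_iff.mp hw
    set F : ℕ → (Fin k → ℤ × ℤ) := fun j => fun i => (x i + (j : ℤ) * w i, w i) with hFdef
    have hFmem : ∀ j < m, F j ∈ T.filter (fun f => lineOf f = L) := by
      intro j hj
      rw [Finset.mem_filter]
      constructor
      · rw [hTdef, Fintype.mem_piFinset]
        intro i
        rw [hAdef, Finset.mem_biUnion]
        refine ⟨w i, ?_, ?_⟩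
        · rw [Finset.mem_Icc]
          have h1 := habs i
          have h2 : |w i| ≤ M := by
            rw [hMdef, Int.le_ediv_iff_mul_le hm0]
            linarith
          constructor
          · linarith [neg_abs_le (w i)]
          · linarith [le_abs_self (w i)]
        · rw [Finset.mem_image]
          refine ⟨x i + (j : ℤ) * w i, ?_, rfl⟩
          rw [Finset.mem_Icc]
          obtain ⟨hj1, hj2⟩ := hgrid j (by omega) i
          obtain ⟨hk1, hk2⟩ := hgrid (j + m) (by omega) i
          have hcast : ((j + m : ℕ) : ℤ) = (j : ℤ) + (m : ℤ) := by push_cast; ring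
          rw [hcast] at hk1 hk2
          constructor
          · apply max_le hj1
            nlinarith
          · apply le_min hj2
            nlinarith
      · rw [hline]
        have e1 : (fun i => ((F j i).1 : ℝ))
            = (fun i => (x i : ℝ)) + (j : ℝ) • (fun i => (w i : ℝ)) := by
          funext i
          simp only [hFdef, Pi.add_apply, Pi.smul_apply, smul_eq_mul]
          push_cast
          ring
        have e2 : (fun i => ((F j i).2 : ℝ)) = (fun i => (w i : ℝ)) := by
          funext i
          simp [hFdef]
        show lineOf (F j) = _
        rw [lineOf, e1, e2, line_shift]
    have hinjF : Set.InjOn F (Finset.range m) := by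
      intro j₁ _ j₂ _ he
      have h := congrFun he i₀
      have h1 : x i₀ + (j₁ : ℤ) * w i₀ = x i₀ + (j₂ : ℤ) * w i₀ := by
        simpa [hFdef] using congrArg Prod.fst h
      have h2 : (j₁ : ℤ) * w i₀ = (j₂ : ℤ) * w i₀ := by omega
      have := mul_right_cancel₀ hi₀ h2
      exact_mod_cast this
    calc m = ((Finset.range m).image F).card := by
          rw [Finset.card_image_of_injOn hinjF, Finset.card_range]
      _ ≤ (T.filter (fun f => lineOf f = L)).card := by
          apply Finset.card_le_card
          intro f hf
          obtain ⟨j, hj, rfl⟩ := Finset.mem_image.mp hf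
          exact hFmem j (Finset.mem_range.mp hj)
  -- S is finite
  have hSfin : S.Finite := by
    apply Set.Finite.subset (T.finite_toSet.image lineOf)
    intro L hL
    have h1 := perline L hL
    have h2 : (T.filter (fun f => lineOf f = L)).Nonempty := Finset.card_pos.mp (by omega)
    obtain ⟨f, hf⟩ := h2
    rw [Finset.mem_filter] at hf
    exact ⟨f, hf.1, hf.2⟩
  set S' : Finset (Set (Fin k → ℝ)) := hSfin.toFinset with hS'def
  have hcount : S'.card * m ≤ T.card := by
    have hdisj : ∀ L₁ ∈ S', ∀ L₂ ∈ S', L₁ ≠ L₂ →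
        Disjoint (T.filter (fun f => lineOf f = L₁)) (T.filter (fun f => lineOf f = L₂)) := by
      intro L₁ _ L₂ _ hne
      rw [Finset.disjoint_left]
      intro f h1 h2
      rw [Finset.mem_filter] at h1 h2
      exact hne (h1.2 ▸ h2.2 ▸ rfl)
    calc S'.card * m = ∑ _L ∈ S', m := by rw [Finset.sum_const, smul_eq_mul]
      _ ≤ ∑ L ∈ S', (T.filter (fun f => lineOf f = L)).card :=
          Finset.sum_le_sum (fun L hL => perline L (hSfin.mem_toFinset.mp hL))
      _ = (S'.biUnion (fun L => T.filter (fun f => lineOf f = L))).card :=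
          (Finset.card_biUnion hdisj).symm
      _ ≤ T.card := Finset.card_le_card (Finset.biUnion_subset.mpr
          (fun L _ => Finset.filter_subset _ _))
  have hfinal1 : (m : ℤ) * (A.card : ℤ) ≤ (n : ℤ) ^ 2 :=
    Acard_key n m M A hAdef hm1 hM1 hMM
  clear_value A T
  -- real endgame
  have hmR : (0 : ℝ) < (m : ℝ) := by exact_mod_cast hm1
  have hA_le : (A.card : ℝ) ≤ (n : ℝ) ^ 2 / (m : ℝ) := by
    rw [le_div_iff₀ hmR]
    have : ((A.card : ℤ) : ℝ) * ((m : ℤ) : ℝ) ≤ (((n : ℤ) ^ 2 : ℤ) : ℝ) := by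
      exact_mod_cast (by linarith [hfinal1] : (A.card : ℤ) * (m : ℤ) ≤ (n : ℤ) ^ 2)
    push_cast at this ⊢
    linarith
  have hSncard : S.ncard = S'.card := Set.ncard_eq_toFinset_card _ hSfin
  have hS_le : (S.ncard : ℝ) * (m : ℝ) ≤ ((n : ℝ) ^ 2 / (m : ℝ)) ^ k := by
    have h0 : (S.ncard : ℝ) * (m : ℝ) ≤ ((A.card : ℝ)) ^ k := by
      have hnat : S.ncard * m ≤ A.card ^ k := by
        rw [hSncard, ← hTcard]; exact hcount
      exact_mod_cast hnat
    have h1 : ((A.card : ℝ)) ^ k ≤ ((n : ℝ) ^ 2 / (m : ℝ)) ^ k :=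
      pow_le_pow_left₀ (Nat.cast_nonneg _) hA_le k
    linarith
  have hcast2t : (2 : ℝ) ^ t = 2 * (m : ℝ) := by exact_mod_cast h2t
  have hRHS : 2 ^ k * ((n : ℝ) / 2 ^ t) ^ k * (k : ℝ) * (n : ℝ) ^ k / 2 ^ t
      = ((n : ℝ) ^ 2 / (m : ℝ)) ^ k * (k : ℝ) / (2 * (m : ℝ)) := by
    have e : ((n : ℝ) ^ 2 / (m : ℝ)) ^ k = ((n : ℝ) ^ k * (n : ℝ) ^ k) / (m : ℝ) ^ k := by
      rw [div_pow, ← pow_mul, two_mul, pow_add]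
    have hn0 : (n : ℝ) ≠ 0 := by positivity
    have hm0' : (m : ℝ) ≠ 0 := hmR.ne'
    have h2k : (2 : ℝ) ^ k ≠ 0 := by positivity
    rw [hcast2t, e, div_pow, mul_pow]
    field_simp
  rw [hRHS]
  rw [le_div_iff₀ (by positivity : (0 : ℝ) < 2 * (m : ℝ))]
  have hB0 : (0 : ℝ) ≤ ((n : ℝ) ^ 2 / (m : ℝ)) ^ k := by positivity
  have hkR : (2 : ℝ) ≤ (k : ℝ) := by exact_mod_cast hk
  have hSnn : (0 : ℝ) ≤ (S.ncard : ℝ) := Nat.cast_nonneg _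
  nlinarith [hS_le, hB0, hkR, hSnn]
end
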